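/- arXiv:math/0306429 — 6 statements merged into one kernel-verified Lean document; each statement's English description precedes it below -/
import Mathlib

section
/- Let κ=(κ₁,κ₂) with 0<κ₁<1 and 0<κ₂<1, and let f:ℝ²∖{0}→ℝ be κ-homogeneous of degree 1 and smooth away from the origin. Let c=1 and let ψ̃∈C_c^∞(ℝ²) with ψ̃≥0 and ψ̃(y)≥1 whenever |y₁|≤1 and |y₂|≤1. Define Mg(x)=sup_{t>0} |∫_{ℝ²} g(x₁−t y₁, x₂−t y₂, x₃−t(1+f(y))) ψ̃(y) √(1+|∇f(y)|²) dy|. If for some p with 1≤p<∞ there exists C>0 such that ‖Mg‖_{L^p(ℝ³)} ≤ C‖g‖_{L^p(ℝ³)} for all bounded, compactly supported, nonnegative measurable g, then p > 1/(κ₁+κ₂). -/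
open MeasureTheory Real

/-- First partial derivative of `f : ℝ² → ℝ`. -/
noncomputable def pd1 (f : ℝ × ℝ → ℝ) (x : ℝ × ℝ) : ℝ := fderiv ℝ f x (1, 0)

/-- Second partial derivative of `f : ℝ² → ℝ`. -/
noncomputable def pd2 (f : ℝ × ℝ → ℝ) (x : ℝ × ℝ) : ℝ := fderiv ℝ f x (0, 1)

/-- Hessian determinant `det D²f(x)`. -/
noncomputable def hessDet (f : ℝ × ℝ → ℝ) (x : ℝ × ℝ) : ℝ :=
  pd1 (pd1 f) x * pd2 (pd2 f) x - pd2 (pd1 f) x * pd1 (pd2 f) x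

/-- The maximal operator associated to the surface `x₃ = c + f(x₁,x₂)`, with density `ψ`,
taking values in `[0,∞]`. -/
noncomputable def maxOp (c : ℝ) (f ψ : ℝ × ℝ → ℝ) (g : ℝ × ℝ × ℝ → ℝ)
    (x : ℝ × ℝ × ℝ) : ENNReal :=
  ⨆ (t : ℝ) (_ : 0 < t), ENNReal.ofReal
    |∫ y : ℝ × ℝ, g (x.1 - t * y.1, x.2.1 - t * y.2, x.2.2 - t * (c + f y)) * ψ y *
      Real.sqrt (1 + ((pd1 f y) ^ 2 + (pd2 f y) ^ 2))|

/-- `L^p` "norm" (in `[0,∞]`) of an `[0,∞]`-valued function on `ℝ³`. -/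
noncomputable def lpE (p : ℝ) (F : ℝ × ℝ × ℝ → ENNReal) : ENNReal :=
  (∫⁻ x, F x ^ p) ^ (1 / p)

/-- `L^p` "norm" (in `[0,∞]`) of a real-valued function on `ℝ³`. -/
noncomputable def lpR (p : ℝ) (g : ℝ × ℝ × ℝ → ℝ) : ENNReal :=
  (∫⁻ x, ENNReal.ofReal |g x| ^ p) ^ (1 / p)

section Aux

open Set

lemma aux_scale_decomp (κ₁ κ₂ : ℝ) (hκ₁ : 0 < κ₁) (hκ₂ : 0 < κ₂) (y : ℝ × ℝ) (hy : y ≠ 0) :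
    ∃ r : ℝ, 0 < r ∧ ∃ z : ℝ × ℝ, ‖z‖ = 1 ∧ y = (r ^ κ₁ * z.1, r ^ κ₂ * z.2) ∧
      r = max (|y.1| ^ (1/κ₁)) (|y.2| ^ (1/κ₂)) := by
  set r : ℝ := max (|y.1| ^ (1/κ₁)) (|y.2| ^ (1/κ₂)) with hrdef
  have hy' : y.1 ≠ 0 ∨ y.2 ≠ 0 := by
    by_contra h
    push_neg at h
    exact hy (Prod.ext h.1 h.2)
  have hr : 0 < r := by
    rcases hy' with h | h
    · exact lt_of_lt_of_le (Real.rpow_pos_of_pos (abs_pos.2 h) _) (le_max_left _ _)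
    · exact lt_of_lt_of_le (Real.rpow_pos_of_pos (abs_pos.2 h) _) (le_max_right _ _)
  have hid1 : (|y.1| ^ (1/κ₁)) ^ κ₁ = |y.1| := by
    rw [← Real.rpow_mul (abs_nonneg _), one_div_mul_cancel hκ₁.ne', Real.rpow_one]
  have hid2 : (|y.2| ^ (1/κ₂)) ^ κ₂ = |y.2| := by
    rw [← Real.rpow_mul (abs_nonneg _), one_div_mul_cancel hκ₂.ne', Real.rpow_one]
  have h1 : |y.1| ≤ r ^ κ₁ := by
    calc |y.1| = (|y.1| ^ (1/κ₁)) ^ κ₁ := hid1.symm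
    _ ≤ r ^ κ₁ := Real.rpow_le_rpow (Real.rpow_nonneg (abs_nonneg _) _) (le_max_left _ _) hκ₁.le
  have h2 : |y.2| ≤ r ^ κ₂ := by
    calc |y.2| = (|y.2| ^ (1/κ₂)) ^ κ₂ := hid2.symm
    _ ≤ r ^ κ₂ := Real.rpow_le_rpow (Real.rpow_nonneg (abs_nonneg _) _) (le_max_right _ _) hκ₂.le
  have hp1 : (0:ℝ) < r ^ κ₁ := Real.rpow_pos_of_pos hr _
  have hp2 : (0:ℝ) < r ^ κ₂ := Real.rpow_pos_of_pos hr _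
  refine ⟨r, hr, (y.1 / r ^ κ₁, y.2 / r ^ κ₂), ?_, ?_, rfl⟩
  · have hd1 : |y.1 / r ^ κ₁| = |y.1| / r ^ κ₁ := by
      rw [abs_div, abs_of_pos hp1]
    have hd2 : |y.2 / r ^ κ₂| = |y.2| / r ^ κ₂ := by
      rw [abs_div, abs_of_pos hp2]
    have hle1 : |y.1| / r ^ κ₁ ≤ 1 := (div_le_one hp1).2 h1
    have hle2 : |y.2| / r ^ κ₂ ≤ 1 := (div_le_one hp2).2 h2
    have hmax : max (|y.1| / r ^ κ₁) (|y.2| / r ^ κ₂) = 1 := by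
      rcases le_total (|y.1| ^ (1/κ₁)) (|y.2| ^ (1/κ₂)) with h | h
      · have : r = |y.2| ^ (1/κ₂) := max_eq_right h
        have he : |y.2| = r ^ κ₂ := by rw [this, hid2]
        have : |y.2| / r ^ κ₂ = 1 := by rw [he]; field_simp
        rw [max_eq_right (this ▸ hle1), this]
      · have : r = |y.1| ^ (1/κ₁) := max_eq_left h
        have he : |y.1| = r ^ κ₁ := by rw [this, hid1]
        have : |y.1| / r ^ κ₁ = 1 := by rw [he]; field_simp
        rw [max_eq_left (this ▸ hle2), this]
    simp only [Prod.norm_def, Real.norm_eq_abs, hd1, hd2, hmax]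
  · have e1 : r ^ κ₁ * (y.1 / r ^ κ₁) = y.1 := by field_simp
    have e2 : r ^ κ₂ * (y.2 / r ^ κ₂) = y.2 := by field_simp
    exact Prod.ext e1.symm e2.symm

lemma aux_sphere_ne {z : ℝ × ℝ} (hz : ‖z‖ = 1) : z ≠ 0 := by
  intro h; rw [h, norm_zero] at hz; norm_num at hz

lemma aux_one_zero_sphere : ‖((1:ℝ), (0:ℝ))‖ = 1 := by
  simp [Prod.norm_def]

lemma aux_ne_zero_open : IsOpen {x : ℝ × ℝ | x ≠ 0} := by
  have : {x : ℝ × ℝ | x ≠ 0} = {(0 : ℝ × ℝ)}ᶜ := by ext x; simp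
  rw [this]; exact isOpen_compl_singleton

lemma aux_hom_bound (κ₁ κ₂ : ℝ) (hκ₁ : 0 < κ₁) (hκ₂ : 0 < κ₂)
    (f : ℝ × ℝ → ℝ)
    (hhom : ∀ x : ℝ × ℝ, x ≠ 0 → ∀ r : ℝ, 0 < r →
      f (r ^ κ₁ * x.1, r ^ κ₂ * x.2) = r * f x)
    (hsm : ContDiffOn ℝ (⊤ : ℕ∞) f {x : ℝ × ℝ | x ≠ 0}) :
    ∃ M : ℝ, 0 ≤ M ∧ ∀ y : ℝ × ℝ, y ≠ 0 → ∀ s : ℝ, 0 < s →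
      |y.1| ≤ s ^ κ₁ → |y.2| ≤ s ^ κ₂ → |f y| ≤ M * s := by
  have hsub : Metric.sphere (0 : ℝ × ℝ) 1 ⊆ {x : ℝ × ℝ | x ≠ 0} := by
    intro z hz
    have : ‖z‖ = 1 := by rwa [mem_sphere_zero_iff_norm] at hz
    exact aux_sphere_ne this
  obtain ⟨M, hM⟩ := (isCompact_sphere (0 : ℝ × ℝ) 1).exists_bound_of_continuousOn
    (hsm.continuousOn.mono hsub)
  have hM0 : 0 ≤ M := le_trans (norm_nonneg _)
    (hM _ (by rw [mem_sphere_zero_iff_norm]; exact aux_one_zero_sphere))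
  refine ⟨M, hM0, fun y hy s hs hy1 hy2 => ?_⟩
  obtain ⟨r, hr, z, hz, hyz, hrdef⟩ := aux_scale_decomp κ₁ κ₂ hκ₁ hκ₂ y hy
  have hrs : r ≤ s := by
    rw [hrdef]
    have e1 : |y.1| ^ (1/κ₁) ≤ s := by
      calc |y.1| ^ (1/κ₁) ≤ (s ^ κ₁) ^ (1/κ₁) :=
        Real.rpow_le_rpow (abs_nonneg _) hy1 (by positivity)
      _ = s := by rw [← Real.rpow_mul hs.le, mul_one_div_cancel hκ₁.ne', Real.rpow_one]
    have e2 : |y.2| ^ (1/κ₂) ≤ s := by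
      calc |y.2| ^ (1/κ₂) ≤ (s ^ κ₂) ^ (1/κ₂) :=
        Real.rpow_le_rpow (abs_nonneg _) hy2 (by positivity)
      _ = s := by rw [← Real.rpow_mul hs.le, mul_one_div_cancel hκ₂.ne', Real.rpow_one]
    exact max_le e1 e2
  have hf : f y = r * f z := by
    rw [hyz]; exact hhom z (aux_sphere_ne hz) r hr
  have hfz : |f z| ≤ M := by
    have := hM z (by rwa [mem_sphere_zero_iff_norm])
    rwa [Real.norm_eq_abs] at this
  calc |f y| = r * |f z| := by rw [hf, abs_mul, abs_of_pos hr]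
  _ ≤ r * M := by exact mul_le_mul_of_nonneg_left hfz hr.le
  _ ≤ s * M := by exact mul_le_mul_of_nonneg_right hrs hM0
  _ = M * s := mul_comm _ _

lemma aux_fderiv_hom (κ₁ κ₂ : ℝ) (f : ℝ × ℝ → ℝ)
    (hhom : ∀ x : ℝ × ℝ, x ≠ 0 → ∀ r : ℝ, 0 < r →
      f (r ^ κ₁ * x.1, r ^ κ₂ * x.2) = r * f x)
    (hsm : ContDiffOn ℝ (⊤ : ℕ∞) f {x : ℝ × ℝ | x ≠ 0})
    (z : ℝ × ℝ) (hz : z ≠ 0) (r : ℝ) (hr : 0 < r) (v : ℝ × ℝ) :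
    fderiv ℝ f (r ^ κ₁ * z.1, r ^ κ₂ * z.2) (r ^ κ₁ * v.1, r ^ κ₂ * v.2)
      = r * fderiv ℝ f z v := by
  set L : (ℝ × ℝ) →L[ℝ] (ℝ × ℝ) :=
    ((r ^ κ₁) • ContinuousLinearMap.id ℝ ℝ).prodMap ((r ^ κ₂) • ContinuousLinearMap.id ℝ ℝ)
      with hLdef
  have hL : ∀ w : ℝ × ℝ, L w = (r ^ κ₁ * w.1, r ^ κ₂ * w.2) := by
    intro w
    simp [hLdef, ContinuousLinearMap.prodMap, smul_eq_mul]
  have hLz : L z ≠ 0 := by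
    rw [hL]
    intro h
    rw [Prod.ext_iff] at h
    apply hz
    have h1 : z.1 = 0 := by
      have := h.1; simp only at this
      rcases mul_eq_zero.1 this with h' | h'
      · exact absurd h' (ne_of_gt (Real.rpow_pos_of_pos hr _))
      · exact h'
    have h2 : z.2 = 0 := by
      have := h.2; simp only at this
      rcases mul_eq_zero.1 this with h' | h'
      · exact absurd h' (ne_of_gt (Real.rpow_pos_of_pos hr _))
      · exact h'
    exact Prod.ext h1 h2
  have hdiff : ∀ w : ℝ × ℝ, w ≠ 0 → DifferentiableAt ℝ f w := fun w hw =>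
    ((hsm.contDiffAt (aux_ne_zero_open.mem_nhds hw)).differentiableAt (by simp))
  have hchain : fderiv ℝ (f ∘ L) z = (fderiv ℝ f (L z)).comp L := by
    rw [fderiv_comp z (hdiff _ hLz) L.differentiableAt, L.fderiv]
  have heq : (f ∘ L) =ᶠ[nhds z] fun x => r * f x := by
    filter_upwards [aux_ne_zero_open.mem_nhds hz] with x hx
    simp only [Function.comp_apply, hL x]
    exact hhom x hx r hr
  have hconst : fderiv ℝ (fun x => r * f x) z = r • fderiv ℝ f z :=
    ((hdiff z hz).hasFDerivAt.const_mul r).fderiv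
  have hkey : fderiv ℝ (f ∘ L) z = fderiv ℝ (fun x => r * f x) z := heq.fderiv_eq
  rw [hchain, hconst] at hkey
  have hv := congrArg (fun (T : (ℝ × ℝ) →L[ℝ] ℝ) => T v) hkey
  simp only [ContinuousLinearMap.coe_comp', Function.comp_apply,
    ContinuousLinearMap.smul_apply, smul_eq_mul] at hv
  rw [← hL z, ← hL v]
  exact hv

lemma aux_pd_hom (κ₁ κ₂ : ℝ) (hκ₁ : 0 < κ₁) (hκ₂ : 0 < κ₂)
    (f : ℝ × ℝ → ℝ)
    (hhom : ∀ x : ℝ × ℝ, x ≠ 0 → ∀ r : ℝ, 0 < r →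
      f (r ^ κ₁ * x.1, r ^ κ₂ * x.2) = r * f x)
    (hsm : ContDiffOn ℝ (⊤ : ℕ∞) f {x : ℝ × ℝ | x ≠ 0})
    (z : ℝ × ℝ) (hz : z ≠ 0) (r : ℝ) (hr : 0 < r) :
    pd1 f (r ^ κ₁ * z.1, r ^ κ₂ * z.2) = r / r ^ κ₁ * pd1 f z ∧
    pd2 f (r ^ κ₁ * z.1, r ^ κ₂ * z.2) = r / r ^ κ₂ * pd2 f z := by
  have hp1 : (0:ℝ) < r ^ κ₁ := Real.rpow_pos_of_pos hr _
  have hp2 : (0:ℝ) < r ^ κ₂ := Real.rpow_pos_of_pos hr _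
  constructor
  · have h := aux_fderiv_hom κ₁ κ₂ f hhom hsm z hz r hr (1, 0)
    simp only [mul_one, mul_zero] at h
    have e : ((r ^ κ₁ : ℝ), (0:ℝ)) = (r ^ κ₁) • ((1:ℝ), (0:ℝ)) := by
      simp [Prod.smul_mk]
    rw [e, ContinuousLinearMap.map_smul, smul_eq_mul] at h
    unfold pd1
    field_simp at h ⊢
    linarith [h]
  · have h := aux_fderiv_hom κ₁ κ₂ f hhom hsm z hz r hr (0, 1)
    simp only [mul_one, mul_zero] at h
    have e : ((0:ℝ), (r ^ κ₂ : ℝ)) = (r ^ κ₂) • ((0:ℝ), (1:ℝ)) := by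
      simp [Prod.smul_mk]
    rw [e, ContinuousLinearMap.map_smul, smul_eq_mul] at h
    unfold pd2
    field_simp at h ⊢
    linarith [h]

lemma aux_sqrt_bound (κ₁ κ₂ : ℝ) (hκ₁ : 0 < κ₁) (hκ₁' : κ₁ < 1) (hκ₂ : 0 < κ₂) (hκ₂' : κ₂ < 1)
    (f : ℝ × ℝ → ℝ)
    (hhom : ∀ x : ℝ × ℝ, x ≠ 0 → ∀ r : ℝ, 0 < r →
      f (r ^ κ₁ * x.1, r ^ κ₂ * x.2) = r * f x)
    (hsm : ContDiffOn ℝ (⊤ : ℕ∞) f {x : ℝ × ℝ | x ≠ 0})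
    (R : ℝ) :
    ∃ W : ℝ, 0 ≤ W ∧ ∀ y : ℝ × ℝ, y ≠ 0 → ‖y‖ ≤ R →
      Real.sqrt (1 + ((pd1 f y) ^ 2 + (pd2 f y) ^ 2)) ≤ W := by
  have hsub : Metric.sphere (0 : ℝ × ℝ) 1 ⊆ {x : ℝ × ℝ | x ≠ 0} := by
    intro z hz
    exact aux_sphere_ne (by rwa [mem_sphere_zero_iff_norm] at hz)
  have hcf : ContinuousOn (fderiv ℝ f) {x : ℝ × ℝ | x ≠ 0} :=
    hsm.continuousOn_fderiv_of_isOpen aux_ne_zero_open (by exact_mod_cast le_top)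
  have hc1 : ContinuousOn (pd1 f) (Metric.sphere (0 : ℝ × ℝ) 1) :=
    (hcf.mono hsub).clm_apply continuousOn_const
  have hc2 : ContinuousOn (pd2 f) (Metric.sphere (0 : ℝ × ℝ) 1) :=
    (hcf.mono hsub).clm_apply continuousOn_const
  obtain ⟨M₁, hM₁⟩ := (isCompact_sphere (0 : ℝ × ℝ) 1).exists_bound_of_continuousOn hc1
  obtain ⟨M₂, hM₂⟩ := (isCompact_sphere (0 : ℝ × ℝ) 1).exists_bound_of_continuousOn hc2
  have hM₁0 : 0 ≤ M₁ := le_trans (norm_nonneg _)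
    (hM₁ _ (by rw [mem_sphere_zero_iff_norm]; exact aux_one_zero_sphere))
  have hM₂0 : 0 ≤ M₂ := le_trans (norm_nonneg _)
    (hM₂ _ (by rw [mem_sphere_zero_iff_norm]; exact aux_one_zero_sphere))
  set R₁ : ℝ := max (max (|R| ^ (1/κ₁)) (|R| ^ (1/κ₂))) 1 with hR₁def
  have hR₁1 : (1:ℝ) ≤ R₁ := le_max_right _ _
  have hR₁0 : (0:ℝ) < R₁ := lt_of_lt_of_le one_pos hR₁1
  set W₁ : ℝ := R₁ ^ (1 - κ₁) * M₁ with hW₁def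
  set W₂ : ℝ := R₁ ^ (1 - κ₂) * M₂ with hW₂def
  refine ⟨Real.sqrt (1 + (W₁ ^ 2 + W₂ ^ 2)), Real.sqrt_nonneg _, fun y hy hyR => ?_⟩
  obtain ⟨r, hr, z, hz, hyz, hrdef⟩ := aux_scale_decomp κ₁ κ₂ hκ₁ hκ₂ y hy
  have hrR : r ≤ R₁ := by
    rw [hrdef]
    have hb1 : |y.1| ≤ |R| := by
      calc |y.1| = ‖y.1‖ := (Real.norm_eq_abs _).symm
      _ ≤ ‖y‖ := by rw [Prod.norm_def]; exact le_max_left _ _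
      _ ≤ |R| := le_trans hyR (le_abs_self R)
    have hb2 : |y.2| ≤ |R| := by
      calc |y.2| = ‖y.2‖ := (Real.norm_eq_abs _).symm
      _ ≤ ‖y‖ := by rw [Prod.norm_def]; exact le_max_right _ _
      _ ≤ |R| := le_trans hyR (le_abs_self R)
    have e1 : |y.1| ^ (1/κ₁) ≤ |R| ^ (1/κ₁) :=
      Real.rpow_le_rpow (abs_nonneg _) hb1 (by positivity)
    have e2 : |y.2| ^ (1/κ₂) ≤ |R| ^ (1/κ₂) :=
      Real.rpow_le_rpow (abs_nonneg _) hb2 (by positivity)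
    exact max_le (le_trans e1 (le_trans (le_max_left _ _) (le_max_left _ _)))
      (le_trans e2 (le_trans (le_max_right _ _) (le_max_left _ _)))
  obtain ⟨hpd1, hpd2⟩ := aux_pd_hom κ₁ κ₂ hκ₁ hκ₂ f hhom hsm z (aux_sphere_ne hz) r hr
  have hrpow1 : r / r ^ κ₁ = r ^ (1 - κ₁) := by
    rw [Real.rpow_sub hr, Real.rpow_one]
  have hrpow2 : r / r ^ κ₂ = r ^ (1 - κ₂) := by
    rw [Real.rpow_sub hr, Real.rpow_one]
  have hrb1 : r ^ (1 - κ₁) ≤ R₁ ^ (1 - κ₁) := Real.rpow_le_rpow hr.le hrR (by linarith)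
  have hrb2 : r ^ (1 - κ₂) ≤ R₁ ^ (1 - κ₂) := Real.rpow_le_rpow hr.le hrR (by linarith)
  have hfz1 : |pd1 f z| ≤ M₁ := by
    have := hM₁ z (by rwa [mem_sphere_zero_iff_norm]); rwa [Real.norm_eq_abs] at this
  have hfz2 : |pd2 f z| ≤ M₂ := by
    have := hM₂ z (by rwa [mem_sphere_zero_iff_norm]); rwa [Real.norm_eq_abs] at this
  have hb1 : |pd1 f y| ≤ W₁ := by
    rw [hyz, hpd1, abs_mul, hrpow1, abs_of_pos (Real.rpow_pos_of_pos hr _)]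
    exact mul_le_mul hrb1 hfz1 (abs_nonneg _) (Real.rpow_nonneg hR₁0.le _)
  have hb2 : |pd2 f y| ≤ W₂ := by
    rw [hyz, hpd2, abs_mul, hrpow2, abs_of_pos (Real.rpow_pos_of_pos hr _)]
    exact mul_le_mul hrb2 hfz2 (abs_nonneg _) (Real.rpow_nonneg hR₁0.le _)
  apply Real.sqrt_le_sqrt
  have s1 : (pd1 f y) ^ 2 ≤ W₁ ^ 2 := by
    have := abs_le.1 hb1; nlinarith [this.1, this.2]
  have s2 : (pd2 f y) ^ 2 ≤ W₂ ^ 2 := by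
    have := abs_le.1 hb2; nlinarith [this.1, this.2]
  linarith

lemma aux_zero_null : (volume : Measure (ℝ × ℝ)) {(0 : ℝ × ℝ)} = 0 := by
  have h : ({(0 : ℝ × ℝ)} : Set (ℝ × ℝ)) = ({(0:ℝ)} : Set ℝ) ×ˢ ({(0:ℝ)} : Set ℝ) := by
    rw [Set.singleton_prod_singleton]; rfl
  rw [h, MeasureTheory.Measure.volume_eq_prod, Measure.prod_prod, Real.volume_singleton, mul_zero]

lemma aux_ae_ne_zero : ∀ᵐ y : ℝ × ℝ, y ≠ 0 := by
  rw [MeasureTheory.ae_iff]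
  convert aux_zero_null using 2
  ext y; simp

lemma aux_f_aemeasurable (f : ℝ × ℝ → ℝ)
    (hsm : ContDiffOn ℝ (⊤ : ℕ∞) f {x : ℝ × ℝ | x ≠ 0}) :
    AEMeasurable f (volume : Measure (ℝ × ℝ)) := by
  have hres : (volume : Measure (ℝ × ℝ)).restrict {x : ℝ × ℝ | x ≠ 0} = volume :=
    Measure.restrict_eq_self_of_ae_mem aux_ae_ne_zero
  have := hsm.continuousOn.aemeasurable (μ := (volume : Measure (ℝ × ℝ)))
    aux_ne_zero_open.measurableSet
  rwa [hres] at this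

lemma aux_integrand_integrable (f ψ : ℝ × ℝ → ℝ)
    (hfm : AEMeasurable f (volume : Measure (ℝ × ℝ)))
    (hψc : Continuous ψ) (hψsupp : HasCompactSupport ψ)
    (Bψ : ℝ) (hBψ : ∀ y, ‖ψ y‖ ≤ Bψ)
    (W : ℝ) (hW : ∀ᵐ y : ℝ × ℝ, y ∈ tsupport ψ →
      Real.sqrt (1 + ((pd1 f y) ^ 2 + (pd2 f y) ^ 2)) ≤ W)
    (g : ℝ × ℝ × ℝ → ℝ) (hg : Measurable g) (hgb : ∀ u, ‖g u‖ ≤ 1)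
    (x : ℝ × ℝ × ℝ) (t : ℝ) :
    Integrable (fun y : ℝ × ℝ =>
      g (x.1 - t * y.1, x.2.1 - t * y.2, x.2.2 - t * (1 + f y)) * ψ y *
        Real.sqrt (1 + ((pd1 f y) ^ 2 + (pd2 f y) ^ 2))) volume := by
  set h := fun y : ℝ × ℝ =>
      g (x.1 - t * y.1, x.2.1 - t * y.2, x.2.2 - t * (1 + f y)) * ψ y *
        Real.sqrt (1 + ((pd1 f y) ^ 2 + (pd2 f y) ^ 2)) with hdef
  have hm1 : Measurable (pd1 f) := measurable_fderiv_apply_const ℝ f ((1:ℝ), (0:ℝ))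
  have hm2 : Measurable (pd2 f) := measurable_fderiv_apply_const ℝ f ((0:ℝ), (1:ℝ))
  have hsqrtm : Measurable (fun y : ℝ × ℝ =>
      Real.sqrt (1 + ((pd1 f y) ^ 2 + (pd2 f y) ^ 2))) :=
    Real.continuous_sqrt.measurable.comp
      (measurable_const.add ((hm1.pow_const 2).add (hm2.pow_const 2)))
  have hΦ : AEMeasurable (fun y : ℝ × ℝ =>
      ((x.1 - t * y.1, x.2.1 - t * y.2, x.2.2 - t * (1 + f y)) : ℝ × ℝ × ℝ)) volume := by
    refine AEMeasurable.prodMk ?_ (AEMeasurable.prodMk ?_ ?_)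
    · exact (measurable_const.sub (measurable_fst.const_mul t)).aemeasurable
    · exact (measurable_const.sub (measurable_snd.const_mul t)).aemeasurable
    · exact (aemeasurable_const.sub (((aemeasurable_const.add hfm).const_mul t)))
  have hmeas : AEMeasurable h volume := by
    exact ((hg.comp_aemeasurable hΦ).mul hψc.measurable.aemeasurable).mul hsqrtm.aemeasurable
  have hsupp : Function.support h ⊆ tsupport ψ := by
    intro y hy
    by_contra hns
    have : ψ y = 0 := image_eq_zero_of_notMem_tsupport hns
    apply hy
    simp [hdef, this]
  rw [← integrableOn_iff_integrable_of_support_subset hsupp]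
  apply Measure.integrableOn_of_bounded (M := 1 * Bψ * W)
  · exact hψsupp.isCompact.measure_lt_top.ne
  · exact hmeas.aestronglyMeasurable
  · rw [ae_restrict_iff' (isClosed_tsupport ψ).measurableSet]
    filter_upwards [hW] with y hWy hymem
    have hWy' := hWy hymem
    have h0 : (0:ℝ) ≤ Real.sqrt (1 + ((pd1 f y) ^ 2 + (pd2 f y) ^ 2)) := Real.sqrt_nonneg _
    have hBψ0 : 0 ≤ Bψ := le_trans (norm_nonneg _) (hBψ y)
    have hW0 : 0 ≤ W := le_trans h0 hWy'
    calc ‖h y‖ = ‖g (x.1 - t * y.1, x.2.1 - t * y.2, x.2.2 - t * (1 + f y))‖ * ‖ψ y‖ *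
        ‖Real.sqrt (1 + ((pd1 f y) ^ 2 + (pd2 f y) ^ 2))‖ := by
          simp [hdef, norm_mul]
    _ ≤ 1 * Bψ * W := by
        apply mul_le_mul _ _ (norm_nonneg _) (by positivity)
        · exact mul_le_mul (hgb _) (hBψ _) (norm_nonneg _) zero_le_one
        · rw [Real.norm_eq_abs, abs_of_nonneg h0]; exact hWy'

end Aux

set_option maxHeartbeats 1000000 in
/-- For `0 < κ₁ < 1`, `0 < κ₂ < 1`, `f` `κ`-homogeneous of degree 1 and smooth
away from the origin, `c = 1` and `ψ̃ ≥ 1` on the unit square, `L^p`-boundedness of the maximal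
operator on bounded, compactly supported, nonnegative measurable functions forces
`p > 1/(κ₁+κ₂)`. -/
theorem necessity_homogeneity_exponent
    (κ₁ κ₂ : ℝ) (hκ₁ : 0 < κ₁) (hκ₁' : κ₁ < 1) (hκ₂ : 0 < κ₂) (hκ₂' : κ₂ < 1)
    (f : ℝ × ℝ → ℝ)
    (hhom : ∀ x : ℝ × ℝ, x ≠ 0 → ∀ r : ℝ, 0 < r →
      f (r ^ κ₁ * x.1, r ^ κ₂ * x.2) = r * f x)
    (hsm : ContDiffOn ℝ (⊤ : ℕ∞) f {x : ℝ × ℝ | x ≠ 0})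
    (ψ : ℝ × ℝ → ℝ)
    (hψsm : ContDiff ℝ (⊤ : ℕ∞) ψ) (hψsupp : HasCompactSupport ψ) (hψpos : ∀ y, 0 ≤ ψ y)
    (hψ1 : ∀ y : ℝ × ℝ, |y.1| ≤ 1 → |y.2| ≤ 1 → 1 ≤ ψ y)
    (p : ℝ) (hp1 : 1 ≤ p)
    (hbdd : ∃ C > 0, ∀ g : ℝ × ℝ × ℝ → ℝ, Measurable g → HasCompactSupport g →
        (∀ x, 0 ≤ g x) → (∃ B : ℝ, ∀ x, g x ≤ B) →
        lpE p (maxOp 1 f ψ g) ≤ ENNReal.ofReal C * lpR p g) :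
    1 / (κ₁ + κ₂) < p := by
  classical
  by_contra hcon
  push_neg at hcon
  obtain ⟨C, hC, hop⟩ := hbdd
  set σ : ℝ := κ₁ + κ₂ with hσdef
  have hσ : 0 < σ := by positivity
  have hp0 : 0 < p := lt_of_lt_of_le one_pos hp1
  have hpσ : p * σ ≤ 1 := by
    rw [le_div_iff₀ hσ] at hcon
    linarith [hcon]
  -- constants
  obtain ⟨M, hM0, hMb⟩ := aux_hom_bound κ₁ κ₂ hκ₁ hκ₂ f hhom hsm
  obtain ⟨Bψ, hBψ⟩ := hψsm.continuous.bounded_above_of_compact_support hψsupp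
  obtain ⟨R, hR⟩ := hψsupp.isBounded.subset_closedBall (0 : ℝ × ℝ)
  obtain ⟨W, hW0, hWb⟩ := aux_sqrt_bound κ₁ κ₂ hκ₁ hκ₁' hκ₂ hκ₂' f hhom hsm R
  have hfm : AEMeasurable f (volume : Measure (ℝ × ℝ)) := aux_f_aemeasurable f hsm
  have hWae : ∀ᵐ y : ℝ × ℝ, y ∈ tsupport ψ →
      Real.sqrt (1 + ((pd1 f y) ^ 2 + (pd2 f y) ^ 2)) ≤ W := by
    filter_upwards [aux_ae_ne_zero] with y hy hymem
    exact hWb y hy (by simpa [Metric.mem_closedBall, dist_zero_right] using hR hymem)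
  -- choice of ε
  set K : ℝ := 8 * C ^ p * (1 + M) / 4 ^ p with hKdef
  have h4p : (0:ℝ) < 4 ^ p := Real.rpow_pos_of_pos (by norm_num) _
  have hK0 : 0 ≤ K := by
    apply div_nonneg _ h4p.le
    have : (0:ℝ) < C ^ p := Real.rpow_pos_of_pos hC _
    nlinarith
  set ε : ℝ := Real.exp (-(K + 1)) with hεdef
  have hε0 : 0 < ε := Real.exp_pos _
  have hε1 : ε ≤ 1 := by
    rw [hεdef]
    calc Real.exp (-(K+1)) ≤ Real.exp 0 := Real.exp_le_exp.2 (by linarith)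
    _ = 1 := Real.exp_zero
  have hlog : Real.log ε = -(K + 1) := Real.log_exp _
  set a₁ : ℝ := ε ^ κ₁ with ha₁def
  set a₂ : ℝ := ε ^ κ₂ with ha₂def
  have ha₁ : 0 < a₁ := Real.rpow_pos_of_pos hε0 _
  have ha₂ : 0 < a₂ := Real.rpow_pos_of_pos hε0 _
  -- the test function
  set B : Set (ℝ × ℝ × ℝ) :=
    Set.Icc (-(2*a₁)) (2*a₁) ×ˢ (Set.Icc (-(2*a₂)) (2*a₂) ×ˢ
      Set.Icc (-((1+M)*ε)) ((1+M)*ε)) with hBdef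
  have hBmeas : MeasurableSet B :=
    measurableSet_Icc.prod (measurableSet_Icc.prod measurableSet_Icc)
  set g : ℝ × ℝ × ℝ → ℝ := B.indicator (fun _ => (1:ℝ)) with hgdef
  have hgmeas : Measurable g := measurable_const.indicator hBmeas
  have hgcs : HasCompactSupport g :=
    HasCompactSupport.intro (isCompact_Icc.prod (isCompact_Icc.prod isCompact_Icc))
      (fun x hx => Set.indicator_of_notMem hx _)
  have hg0 : ∀ x, 0 ≤ g x := fun x => Set.indicator_nonneg (fun _ _ => zero_le_one) x
  have hgb1 : ∀ x, g x ≤ 1 := by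
    intro x
    by_cases hx : x ∈ B <;> simp [hgdef, Set.indicator_apply, hx]
  have hgnorm : ∀ u, ‖g u‖ ≤ 1 := by
    intro u
    rw [Real.norm_eq_abs, abs_of_nonneg (hg0 u)]
    exact hgb1 u
  have hineq := hop g hgmeas hgcs hg0 ⟨1, hgb1⟩
  -- key pointwise lower bound
  have key : ∀ x : ℝ × ℝ × ℝ, |x.1| ≤ a₁ → |x.2.1| ≤ a₂ → x.2.2 ∈ Set.Icc ε 1 →
      ENNReal.ofReal (4 * (ε / x.2.2) ^ σ) ≤ maxOp 1 f ψ g x := by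
    intro x hx1 hx2 hx3
    obtain ⟨hx3ε, hx31⟩ := hx3
    set t : ℝ := x.2.2 with htdef
    have ht : 0 < t := lt_of_lt_of_le hε0 hx3ε
    set s : ℝ := ε / t with hsdef
    have hs0 : 0 < s := div_pos hε0 ht
    have hs1 : s ≤ 1 := (div_le_one ht).2 hx3ε
    set Y : Set (ℝ × ℝ) := Set.Icc (-(s^κ₁)) (s^κ₁) ×ˢ Set.Icc (-(s^κ₂)) (s^κ₂) with hYdef
    have hYmeas : MeasurableSet Y := measurableSet_Icc.prod measurableSet_Icc
    have hYvol : volume Y = ENNReal.ofReal (2*s^κ₁) * ENNReal.ofReal (2*s^κ₂) := by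
      rw [hYdef, MeasureTheory.Measure.volume_eq_prod, Measure.prod_prod, Real.volume_Icc,
        Real.volume_Icc]
      congr 1 <;> · congr 1; ring
    set h : (ℝ × ℝ) → ℝ := fun y =>
      g (x.1 - t * y.1, x.2.1 - t * y.2, x.2.2 - t * (1 + f y)) * ψ y *
        Real.sqrt (1 + ((pd1 f y) ^ 2 + (pd2 f y) ^ 2)) with hhdef
    have hint : Integrable h volume :=
      aux_integrand_integrable f ψ hfm hψsm.continuous hψsupp Bψ hBψ W hWae g hgmeas hgnorm x t
    have hpoint : ∀ y : ℝ × ℝ, y ≠ 0 → Y.indicator (fun _ => (1:ℝ)) y ≤ h y := by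
      intro y hy
      by_cases hmem : y ∈ Y
      · rw [Set.indicator_of_mem hmem]
        simp only [hhdef]
        obtain ⟨hm1, hm2⟩ := hmem
        have hy1 : |y.1| ≤ s^κ₁ := abs_le.2 ⟨hm1.1, hm1.2⟩
        have hy2 : |y.2| ≤ s^κ₂ := abs_le.2 ⟨hm2.1, hm2.2⟩
        have htk1 : t * s ^ κ₁ ≤ a₁ := by
          rw [hsdef, Real.div_rpow hε0.le ht.le]
          have h1 : t / t ^ κ₁ ≤ 1 := by
            rw [div_le_one (Real.rpow_pos_of_pos ht _)]
            calc t = t ^ (1:ℝ) := (Real.rpow_one t).symm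
            _ ≤ t ^ κ₁ := Real.rpow_le_rpow_of_exponent_ge ht hx31 hκ₁'.le
          calc t * (ε ^ κ₁ / t ^ κ₁) = (t / t ^ κ₁) * ε ^ κ₁ := by ring
          _ ≤ 1 * ε ^ κ₁ := mul_le_mul_of_nonneg_right h1 (Real.rpow_nonneg hε0.le _)
          _ = a₁ := by rw [one_mul]
        have htk2 : t * s ^ κ₂ ≤ a₂ := by
          rw [hsdef, Real.div_rpow hε0.le ht.le]
          have h1 : t / t ^ κ₂ ≤ 1 := by
            rw [div_le_one (Real.rpow_pos_of_pos ht _)]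
            calc t = t ^ (1:ℝ) := (Real.rpow_one t).symm
            _ ≤ t ^ κ₂ := Real.rpow_le_rpow_of_exponent_ge ht hx31 hκ₂'.le
          calc t * (ε ^ κ₂ / t ^ κ₂) = (t / t ^ κ₂) * ε ^ κ₂ := by ring
          _ ≤ 1 * ε ^ κ₂ := mul_le_mul_of_nonneg_right h1 (Real.rpow_nonneg hε0.le _)
          _ = a₂ := by rw [one_mul]
        have harg : ((x.1 - t * y.1, x.2.1 - t * y.2, x.2.2 - t * (1 + f y)) : ℝ × ℝ × ℝ) ∈ B := by
          refine ⟨?_, ?_, ?_⟩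
          · have : |x.1 - t * y.1| ≤ |x.1| + |t * y.1| := by
              simpa [sub_eq_add_neg, abs_neg] using abs_add_le x.1 (-(t*y.1))
            have h2 : |t * y.1| ≤ a₁ := by
              rw [abs_mul, abs_of_pos ht]
              calc t * |y.1| ≤ t * s ^ κ₁ := mul_le_mul_of_nonneg_left hy1 ht.le
              _ ≤ a₁ := htk1
            have := abs_le.1 (le_trans this (by linarith : |x.1| + |t * y.1| ≤ 2*a₁))
            exact ⟨this.1, this.2⟩
          · have : |x.2.1 - t * y.2| ≤ |x.2.1| + |t * y.2| := by
              simpa [sub_eq_add_neg, abs_neg] using abs_add_le x.2.1 (-(t*y.2))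
            have h2 : |t * y.2| ≤ a₂ := by
              rw [abs_mul, abs_of_pos ht]
              calc t * |y.2| ≤ t * s ^ κ₂ := mul_le_mul_of_nonneg_left hy2 ht.le
              _ ≤ a₂ := htk2
            have := abs_le.1 (le_trans this (by linarith : |x.2.1| + |t * y.2| ≤ 2*a₂))
            exact ⟨this.1, this.2⟩
          · have hfy : |f y| ≤ M * s := hMb y hy s hs0 hy1 hy2
            have he : x.2.2 - t * (1 + f y) = -(t * f y) := by rw [← htdef]; ring
            have hts : t * s = ε := by rw [hsdef]; field_simp
            have : |x.2.2 - t * (1 + f y)| ≤ (1+M)*ε := by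
              rw [he, abs_neg, abs_mul, abs_of_pos ht]
              calc t * |f y| ≤ t * (M * s) := mul_le_mul_of_nonneg_left hfy ht.le
              _ = M * (t * s) := by ring
              _ = M * ε := by rw [hts]
              _ ≤ (1+M)*ε := by nlinarith
            have := abs_le.1 this
            exact ⟨this.1, this.2⟩
        have hgval : g (x.1 - t * y.1, x.2.1 - t * y.2, x.2.2 - t * (1 + f y)) = 1 :=
          Set.indicator_of_mem harg _
        have hψval : 1 ≤ ψ y :=
          hψ1 y (le_trans hy1 (Real.rpow_le_one hs0.le hs1 hκ₁.le))
            (le_trans hy2 (Real.rpow_le_one hs0.le hs1 hκ₂.le))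
        have hsq : 1 ≤ Real.sqrt (1 + ((pd1 f y) ^ 2 + (pd2 f y) ^ 2)) := by
          have h1 : (1:ℝ) ≤ 1 + ((pd1 f y) ^ 2 + (pd2 f y) ^ 2) := by
            linarith [sq_nonneg (pd1 f y), sq_nonneg (pd2 f y)]
          calc (1:ℝ) = Real.sqrt 1 := Real.sqrt_one.symm
          _ ≤ _ := Real.sqrt_le_sqrt h1
        rw [hgval, one_mul]
        exact le_trans hψval
          (le_mul_of_one_le_right (le_trans zero_le_one hψval) hsq)
      · rw [Set.indicator_of_notMem hmem]
        simp only [hhdef]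
        exact mul_nonneg (mul_nonneg (hg0 _) (hψpos _)) (Real.sqrt_nonneg _)
    have hind_int : Integrable (Y.indicator (fun _ => (1:ℝ))) volume := by
      rw [integrable_indicator_iff hYmeas]
      apply (integrableOn_const_iff).2
      right
      rw [hYvol]
      exact ENNReal.mul_lt_top ENNReal.ofReal_lt_top ENNReal.ofReal_lt_top
    have hIle : (2*s^κ₁) * (2*s^κ₂) ≤ ∫ y, h y := by
      have h1 : ∫ y, Y.indicator (fun _ => (1:ℝ)) y = (2*s^κ₁) * (2*s^κ₂) := by
        rw [MeasureTheory.integral_indicator_const (1:ℝ) hYmeas, measureReal_def, hYvol]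
        rw [smul_eq_mul, mul_one, ENNReal.toReal_mul, ENNReal.toReal_ofReal (by positivity),
          ENNReal.toReal_ofReal (by positivity)]
      rw [← h1]
      apply integral_mono_ae hind_int hint
      filter_upwards [aux_ae_ne_zero] with y hy
      exact hpoint y hy
    have habs : 4 * (ε / t) ^ σ ≤ |∫ y, h y| := by
      have he : 4 * (ε / t) ^ σ = (2*s^κ₁) * (2*s^κ₂) := by
        rw [← hsdef, hσdef, Real.rpow_add hs0]
        ring
      rw [he]
      exact le_trans hIle (le_abs_self _)
    calc ENNReal.ofReal (4 * (ε / t) ^ σ) ≤ ENNReal.ofReal |∫ y, h y| :=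
      ENNReal.ofReal_le_ofReal habs
    _ ≤ maxOp 1 f ψ g x := by
      rw [maxOp]
      exact le_iSup₂ (f := fun (t' : ℝ) (_ : 0 < t') => ENNReal.ofReal
        |∫ y : ℝ × ℝ, g (x.1 - t' * y.1, x.2.1 - t' * y.2, x.2.2 - t' * (1 + f y)) * ψ y *
          Real.sqrt (1 + ((pd1 f y) ^ 2 + (pd2 f y) ^ 2))|) t ht
  -- lower bound for the lintegral
  set F : ℝ × ℝ × ℝ → ENNReal := fun x =>
    (Set.Icc (-a₁) a₁).indicator (fun _ => (1:ENNReal)) x.1 *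
      ((Set.Icc (-a₂) a₂).indicator (fun _ => (1:ENNReal)) x.2.1 *
        (Set.Icc ε 1).indicator (fun u => ENNReal.ofReal ((4:ℝ)^p * ε / u)) x.2.2) with hFdef
  have hFle : ∀ x : ℝ × ℝ × ℝ, F x ≤ (maxOp 1 f ψ g x) ^ p := by
    intro x
    by_cases h1 : x.1 ∈ Set.Icc (-a₁) a₁
    · by_cases h2 : x.2.1 ∈ Set.Icc (-a₂) a₂
      · by_cases h3 : x.2.2 ∈ Set.Icc ε 1
        · have hFx : F x = ENNReal.ofReal ((4:ℝ)^p * ε / x.2.2) := by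
            rw [hFdef]
            simp only [Set.indicator_of_mem h1, Set.indicator_of_mem h2,
              Set.indicator_of_mem h3, one_mul]
          rw [hFx]
          have hx1 : |x.1| ≤ a₁ := abs_le.2 ⟨h1.1, h1.2⟩
          have hx2 : |x.2.1| ≤ a₂ := abs_le.2 ⟨h2.1, h2.2⟩
          have hkey := key x hx1 hx2 h3
          have ht : 0 < x.2.2 := lt_of_lt_of_le hε0 h3.1
          have hs0 : 0 < ε / x.2.2 := div_pos hε0 ht
          have hs1 : ε / x.2.2 ≤ 1 := (div_le_one ht).2 h3.1
          have hreal : (4:ℝ)^p * ε / x.2.2 ≤ (4 * (ε / x.2.2) ^ σ) ^ p := by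
            rw [Real.mul_rpow (by norm_num) (Real.rpow_nonneg hs0.le _),
              ← Real.rpow_mul hs0.le, mul_div_assoc]
            apply mul_le_mul_of_nonneg_left _ h4p.le
            calc ε / x.2.2 = (ε / x.2.2) ^ (1:ℝ) := (Real.rpow_one _).symm
            _ ≤ (ε / x.2.2) ^ (σ * p) :=
              Real.rpow_le_rpow_of_exponent_ge hs0 hs1 (by linarith [hpσ])
          calc ENNReal.ofReal ((4:ℝ)^p * ε / x.2.2)
              ≤ ENNReal.ofReal ((4 * (ε / x.2.2) ^ σ) ^ p) := ENNReal.ofReal_le_ofReal hreal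
          _ = (ENNReal.ofReal (4 * (ε / x.2.2) ^ σ)) ^ p :=
              (ENNReal.ofReal_rpow_of_nonneg (by positivity) hp0.le).symm
          _ ≤ (maxOp 1 f ψ g x) ^ p := ENNReal.rpow_le_rpow hkey hp0.le
        · rw [hFdef]
          simp only [Set.indicator_of_notMem h3, mul_zero]
          exact zero_le
      · rw [hFdef]
        simp only [Set.indicator_of_notMem h2, zero_mul, mul_zero]
        exact zero_le
    · rw [hFdef]
      simp only [Set.indicator_of_notMem h1, zero_mul]
      exact zero_le
  -- computation of the lower bound lintegral
  have hA : Measurable (fun u : ℝ => (Set.Icc (-a₁) a₁).indicator (fun _ => (1:ENNReal)) u) :=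
    measurable_const.indicator measurableSet_Icc
  have hA2 : Measurable (fun u : ℝ => (Set.Icc (-a₂) a₂).indicator (fun _ => (1:ENNReal)) u) :=
    measurable_const.indicator measurableSet_Icc
  have hA3 : Measurable (fun u : ℝ =>
      (Set.Icc ε 1).indicator (fun u => ENNReal.ofReal ((4:ℝ)^p * ε / u)) u) :=
    (ENNReal.measurable_ofReal.comp (measurable_const.div measurable_id)).indicator
      measurableSet_Icc
  have hμ1 : ∫⁻ u : ℝ, (Set.Icc (-a₁) a₁).indicator (fun _ => (1:ENNReal)) u
      = ENNReal.ofReal (2*a₁) := by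
    rw [lintegral_indicator_const measurableSet_Icc, one_mul, Real.volume_Icc]
    congr 1; ring
  have hμ2 : ∫⁻ u : ℝ, (Set.Icc (-a₂) a₂).indicator (fun _ => (1:ENNReal)) u
      = ENNReal.ofReal (2*a₂) := by
    rw [lintegral_indicator_const measurableSet_Icc, one_mul, Real.volume_Icc]
    congr 1; ring
  have hJint : IntegrableOn (fun u : ℝ => (4:ℝ)^p * ε / u) (Set.Icc ε 1) volume := by
    apply ContinuousOn.integrableOn_compact isCompact_Icc
    apply ContinuousOn.div continuousOn_const continuousOn_id
    intro u hu
    exact ne_of_gt (lt_of_lt_of_le hε0 hu.1)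
  have hJval : ∫ u in Set.Icc ε 1, (4:ℝ)^p * ε / u = (4:ℝ)^p * ε * (K+1) := by
    rw [MeasureTheory.integral_Icc_eq_integral_Ioc, ← intervalIntegral.integral_of_le hε1]
    simp_rw [div_eq_mul_inv]
    rw [intervalIntegral.integral_const_mul, integral_inv_of_pos hε0 one_pos,
      show (1:ℝ)/ε = ε⁻¹ from one_div ε, Real.log_inv, hlog]
    ring
  have hJ : ∫⁻ u : ℝ, (Set.Icc ε 1).indicator (fun u => ENNReal.ofReal ((4:ℝ)^p * ε / u)) u
      = ENNReal.ofReal ((4:ℝ)^p * ε * (K+1)) := by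
    rw [lintegral_indicator measurableSet_Icc]
    rw [← ofReal_integral_eq_lintegral_ofReal hJint ?_, hJval]
    filter_upwards [ae_restrict_mem measurableSet_Icc] with u hu
    have hu0 : (0:ℝ) < u := lt_of_lt_of_le hε0 hu.1
    positivity
  have hFint : ∫⁻ x : ℝ × ℝ × ℝ, F x
      = ENNReal.ofReal (2*a₁) * (ENNReal.ofReal (2*a₂) *
          ENNReal.ofReal ((4:ℝ)^p * ε * (K+1))) := by
    have hG : Measurable (fun w : ℝ × ℝ =>
        (Set.Icc (-a₂) a₂).indicator (fun _ => (1:ENNReal)) w.1 *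
          (Set.Icc ε 1).indicator (fun u => ENNReal.ofReal ((4:ℝ)^p * ε / u)) w.2) :=
      (hA2.comp measurable_fst).mul (hA3.comp measurable_snd)
    have e1 : ∫⁻ x : ℝ × ℝ × ℝ, F x
        = (∫⁻ u : ℝ, (Set.Icc (-a₁) a₁).indicator (fun _ => (1:ENNReal)) u) *
          ∫⁻ w : ℝ × ℝ, (Set.Icc (-a₂) a₂).indicator (fun _ => (1:ENNReal)) w.1 *
            (Set.Icc ε 1).indicator (fun u => ENNReal.ofReal ((4:ℝ)^p * ε / u)) w.2 := by
      rw [MeasureTheory.Measure.volume_eq_prod]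
      exact lintegral_prod_mul hA.aemeasurable hG.aemeasurable
    have e2 : ∫⁻ w : ℝ × ℝ, (Set.Icc (-a₂) a₂).indicator (fun _ => (1:ENNReal)) w.1 *
            (Set.Icc ε 1).indicator (fun u => ENNReal.ofReal ((4:ℝ)^p * ε / u)) w.2
        = (∫⁻ u : ℝ, (Set.Icc (-a₂) a₂).indicator (fun _ => (1:ENNReal)) u) *
          ∫⁻ u : ℝ, (Set.Icc ε 1).indicator (fun u => ENNReal.ofReal ((4:ℝ)^p * ε / u)) u := by
      rw [MeasureTheory.Measure.volume_eq_prod]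
      exact lintegral_prod_mul hA2.aemeasurable hA3.aemeasurable
    rw [e1, e2, hμ1, hμ2, hJ, mul_assoc]
  -- computation of the norm of g
  have hYcalc : (∫⁻ x : ℝ × ℝ × ℝ, ENNReal.ofReal |g x| ^ p) = volume B := by
    have hptw : ∀ x : ℝ × ℝ × ℝ, ENNReal.ofReal |g x| ^ p
        = B.indicator (fun _ => (1:ENNReal)) x := by
      intro x
      by_cases hx : x ∈ B
      · simp [hgdef, Set.indicator_of_mem hx, ENNReal.ofReal_one, ENNReal.one_rpow]
      · simp [hgdef, Set.indicator_of_notMem hx, abs_zero, ENNReal.ofReal_zero,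
          ENNReal.zero_rpow_of_pos hp0]
    rw [lintegral_congr hptw, lintegral_indicator_const hBmeas, one_mul]
  have hvolB : volume B = ENNReal.ofReal ((4*a₁) * ((4*a₂) * (2*((1+M)*ε)))) := by
    have hv1 : volume (Set.Icc (-(2*a₁)) (2*a₁)) = ENNReal.ofReal (4*a₁) := by
      rw [Real.volume_Icc]; congr 1; ring
    have hv2 : volume (Set.Icc (-(2*a₂)) (2*a₂)) = ENNReal.ofReal (4*a₂) := by
      rw [Real.volume_Icc]; congr 1; ring
    have hv3 : volume (Set.Icc (-((1+M)*ε)) ((1+M)*ε)) = ENNReal.ofReal (2*((1+M)*ε)) := by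
      rw [Real.volume_Icc]; congr 1; ring
    rw [hBdef, MeasureTheory.Measure.volume_eq_prod, Measure.prod_prod,
      MeasureTheory.Measure.volume_eq_prod, Measure.prod_prod, hv1, hv2, hv3,
      ← ENNReal.ofReal_mul (by positivity), ← ENNReal.ofReal_mul (by positivity)]
  -- raise the boundedness inequality to the p-th power
  simp only [lpE, lpR] at hineq
  have h3 := ENNReal.rpow_le_rpow hineq hp0.le
  rw [ENNReal.mul_rpow_of_nonneg _ _ hp0.le, ← ENNReal.rpow_mul, ← ENNReal.rpow_mul,
    one_div_mul_cancel hp0.ne', ENNReal.rpow_one, ENNReal.rpow_one,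
    ENNReal.ofReal_rpow_of_pos hC, hYcalc, hvolB] at h3
  have hcomb : ENNReal.ofReal (2*a₁) * (ENNReal.ofReal (2*a₂) *
        ENNReal.ofReal ((4:ℝ)^p * ε * (K+1)))
      = ENNReal.ofReal ((2*a₁) * ((2*a₂) * ((4:ℝ)^p * ε * (K+1)))) := by
    rw [← ENNReal.ofReal_mul (by positivity), ← ENNReal.ofReal_mul (by positivity)]
  have hXlow : ENNReal.ofReal ((2*a₁) * ((2*a₂) * ((4:ℝ)^p * ε * (K+1))))
      ≤ ∫⁻ x, maxOp 1 f ψ g x ^ p := by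
    rw [← hcomb, ← hFint]
    exact lintegral_mono hFle
  have hfinal : ENNReal.ofReal ((2*a₁) * ((2*a₂) * ((4:ℝ)^p * ε * (K+1))))
      ≤ ENNReal.ofReal (C^p * ((4*a₁) * ((4*a₂) * (2*((1+M)*ε))))) := by
    rw [ENNReal.ofReal_mul (by positivity : (0:ℝ) ≤ C^p)]
    exact le_trans hXlow h3
  have hrealfinal := (ENNReal.ofReal_le_ofReal_iff (by positivity)).1 hfinal
  have hKid : (4:ℝ)^p * K = 8 * C^p * (1+M) := by
    rw [hKdef]; field_simp
  have hP : (0:ℝ) < a₁ * a₂ * ε * (4:ℝ)^p := by positivity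
  have hKid2 : 4*(a₁*a₂*ε)*((4:ℝ)^p*K) = 4*(a₁*a₂*ε)*(8*C^p*(1+M)) := by rw [hKid]
  nlinarith [hrealfinal, hKid2, hP]
end

section
/- Let U⊆ℝ² be open and g∈C^∞(U). If x⁰∈U satisfies ∂₂g(x⁰)=0 and ∂²₂₂g(x⁰)≠0, then there exists a smooth function γ₂ defined on a neighborhood of x⁰₁ with γ₂(x⁰₁)=x⁰₂ such that, setting γ(x₁)=(x₁,γ₂(x₁)), one has ∂₂g(γ(x₁))=0 for all x₁ in that neighborhood, and moreover (g∘γ)''(x₁) = Hess g(γ(x₁)) / ∂²₂₂g(γ(x₁)). -/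
open Real

/-- Smoothness of partial derivatives. -/
lemma pd_smooth {U : Set (ℝ × ℝ)} (hU : IsOpen U) {f : ℝ × ℝ → ℝ}
    (hf : ContDiffOn ℝ (⊤ : ℕ∞) f U) (v : ℝ × ℝ) :
    ContDiffOn ℝ (⊤ : ℕ∞) (fun x => fderiv ℝ f x v) U := by
  have h1 : ContDiffOn ℝ (⊤ : ℕ∞) (fun x => fderiv ℝ f x) U :=
    hf.fderiv_of_isOpen hU (by exact_mod_cast le_refl _)
  exact h1.clm_apply contDiffOn_const

lemma pd1_smooth {U : Set (ℝ × ℝ)} (hU : IsOpen U) {f : ℝ × ℝ → ℝ}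
    (hf : ContDiffOn ℝ (⊤ : ℕ∞) f U) : ContDiffOn ℝ (⊤ : ℕ∞) (pd1 f) U :=
  pd_smooth hU hf (1, 0)

lemma pd2_smooth {U : Set (ℝ × ℝ)} (hU : IsOpen U) {f : ℝ × ℝ → ℝ}
    (hf : ContDiffOn ℝ (⊤ : ℕ∞) f U) : ContDiffOn ℝ (⊤ : ℕ∞) (pd2 f) U :=
  pd_smooth hU hf (0, 1)

/-- The linear equivalence `(x₁, x₂) ↦ (x₁, c₁ x₁ + c₂ x₂)` for `c₂ ≠ 0`. -/
noncomputable def shearEquiv (c₁ c₂ : ℝ) (h : c₂ ≠ 0) : (ℝ × ℝ) ≃L[ℝ] (ℝ × ℝ) :=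
  ContinuousLinearEquiv.equivOfInverse
    ((ContinuousLinearMap.fst ℝ ℝ ℝ).prod
      (c₁ • ContinuousLinearMap.fst ℝ ℝ ℝ + c₂ • ContinuousLinearMap.snd ℝ ℝ ℝ))
    ((ContinuousLinearMap.fst ℝ ℝ ℝ).prod
      ((-(c₁/c₂)) • ContinuousLinearMap.fst ℝ ℝ ℝ + c₂⁻¹ • ContinuousLinearMap.snd ℝ ℝ ℝ))
    (fun x => by
      ext
      · simp
      · simp only [ContinuousLinearMap.prod_apply, ContinuousLinearMap.add_apply,
          ContinuousLinearMap.smul_apply, ContinuousLinearMap.coe_fst',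
          ContinuousLinearMap.coe_snd', smul_eq_mul]
        field_simp
        ring)
    (fun x => by
      ext
      · simp
      · simp only [ContinuousLinearMap.prod_apply, ContinuousLinearMap.add_apply,
          ContinuousLinearMap.smul_apply, ContinuousLinearMap.coe_fst',
          ContinuousLinearMap.coe_snd', smul_eq_mul]
        field_simp
        ring)

lemma clm_eq_pd (L : (ℝ × ℝ) →L[ℝ] ℝ) :
    L = L (1,0) • ContinuousLinearMap.fst ℝ ℝ ℝ + L (0,1) • ContinuousLinearMap.snd ℝ ℝ ℝ := by
  apply ContinuousLinearMap.ext
  intro v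
  have hv : v = v.1 • ((1:ℝ), (0:ℝ)) + v.2 • ((0:ℝ), (1:ℝ)) := by
    ext <;> simp
  conv_lhs => rw [hv, map_add, map_smul, map_smul]
  simp only [ContinuousLinearMap.add_apply, ContinuousLinearMap.smul_apply,
    ContinuousLinearMap.coe_fst', ContinuousLinearMap.coe_snd', smul_eq_mul]
  ring

lemma hasFDerivAt_shear {f : ℝ × ℝ → ℝ} {z : ℝ × ℝ} (hf : DifferentiableAt ℝ f z)
    (h : fderiv ℝ f z (0,1) ≠ 0) :
    HasFDerivAt (fun w : ℝ × ℝ => (w.1, f w))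
      ((shearEquiv (fderiv ℝ f z (1,0)) (fderiv ℝ f z (0,1)) h : (ℝ × ℝ) →L[ℝ] (ℝ × ℝ))) z := by
  have h1 : HasFDerivAt (fun w : ℝ × ℝ => (w.1, f w))
      ((ContinuousLinearMap.fst ℝ ℝ ℝ).prod (fderiv ℝ f z)) z :=
    (hasFDerivAt_fst).prodMk hf.hasFDerivAt
  have : (shearEquiv (fderiv ℝ f z (1,0)) (fderiv ℝ f z (0,1)) h : (ℝ × ℝ) →L[ℝ] (ℝ × ℝ)) =
      (ContinuousLinearMap.fst ℝ ℝ ℝ).prod (fderiv ℝ f z) := by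
    conv_rhs => rw [clm_eq_pd (fderiv ℝ f z)]
    rfl
  rw [this]
  exact h1

/-- Chain rule specialised to curves `t ↦ (t, γ₂ t)`. -/
lemma chain_rule {U : Set (ℝ × ℝ)} (hU : IsOpen U) {h : ℝ × ℝ → ℝ}
    (hh : ContDiffOn ℝ (⊤ : ℕ∞) h U) {γ₂ : ℝ → ℝ} {s d : ℝ}
    (hz : (s, γ₂ s) ∈ U) (hγ : HasDerivAt γ₂ d s) :
    HasDerivAt (fun t => h (t, γ₂ t))
      (pd1 h (s, γ₂ s) + d * pd2 h (s, γ₂ s)) s := by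
  have hdiff : DifferentiableAt ℝ h (s, γ₂ s) :=
    (hh.contDiffAt (hU.mem_nhds hz)).differentiableAt (by simp)
  have hc : HasDerivAt (fun t => ((t : ℝ), γ₂ t)) ((1 : ℝ), d) s :=
    (hasDerivAt_id s).prodMk hγ
  have := hdiff.hasFDerivAt.comp_hasDerivAt s hc
  refine HasDerivAt.congr_deriv this ?_
  have hv : ((1:ℝ), d) = ((1:ℝ), (0:ℝ)) + d • ((0:ℝ), (1:ℝ)) := by ext <;> simp
  rw [hv, map_add, map_smul]
  simp [pd1, pd2, smul_eq_mul]

/-- If `g` is smooth on an open set `U ⊆ ℝ²`, `∂₂g(x⁰) = 0` and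
`∂²₂₂g(x⁰) ≠ 0`, then near `x⁰₁` there is a smooth curve `γ(x₁) = (x₁, γ₂(x₁))` through `x⁰`
along which `∂₂g` vanishes, and `(g∘γ)''(x₁) = Hess g(γ(x₁)) / ∂²₂₂g(γ(x₁))`. -/
theorem critical_curve_hessian_formula
    (U : Set (ℝ × ℝ)) (hU : IsOpen U) (g : ℝ × ℝ → ℝ)
    (hg : ContDiffOn ℝ (⊤ : ℕ∞) g U)
    (x0 : ℝ × ℝ) (hx0 : x0 ∈ U)
    (h1 : pd2 g x0 = 0) (h2 : pd2 (pd2 g) x0 ≠ 0) :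
    ∃ ε > 0, ∃ γ₂ : ℝ → ℝ,
      ContDiffOn ℝ (⊤ : ℕ∞) γ₂ (Metric.ball x0.1 ε) ∧
      γ₂ x0.1 = x0.2 ∧
      ∀ x₁ ∈ Metric.ball x0.1 ε,
        (x₁, γ₂ x₁) ∈ U ∧
        pd2 g (x₁, γ₂ x₁) = 0 ∧
        deriv (deriv (fun s : ℝ => g (s, γ₂ s))) x₁ =
          hessDet g (x₁, γ₂ x₁) / pd2 (pd2 g) (x₁, γ₂ x₁) := by
  have hle : ((⊤ : ℕ∞) : WithTop ℕ∞) ≤ (⊤ : ℕ∞) := le_refl _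
  have hone : ((⊤ : ℕ∞) : WithTop ℕ∞) ≠ 0 := by simp
  have hf2 : ContDiffOn ℝ (⊤ : ℕ∞) (pd2 g) U := pd2_smooth hU hg
  have hf1 : ContDiffOn ℝ (⊤ : ℕ∞) (pd1 g) U := pd1_smooth hU hg
  have hf22 : ContDiffOn ℝ (⊤ : ℕ∞) (pd2 (pd2 g)) U := pd2_smooth hU hf2
  set V : Set (ℝ × ℝ) := U ∩ (pd2 (pd2 g)) ⁻¹' {(0:ℝ)}ᶜ with hVdef
  have hVopen : IsOpen V :=
    hf22.continuousOn.isOpen_inter_preimage hU isOpen_compl_singleton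
  have hVsub : V ⊆ U := Set.inter_subset_left
  have hx0V : x0 ∈ V := ⟨hx0, h2⟩
  set F : ℝ × ℝ → ℝ × ℝ := fun w => (w.1, pd2 g w) with hFdef
  have hFc : ∀ {z : ℝ × ℝ}, z ∈ U → ContDiffAt ℝ (⊤ : ℕ∞) F z := fun {z} hz =>
    (contDiff_fst.contDiffAt).prodMk (hf2.contDiffAt (hU.mem_nhds hz))
  have hdiffF : ∀ {z : ℝ × ℝ}, z ∈ U → DifferentiableAt ℝ (pd2 g) z := fun {z} hz =>
    (hf2.contDiffAt (hU.mem_nhds hz)).differentiableAt hone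
  have hA : HasFDerivAt F
      ((shearEquiv (pd1 (pd2 g) x0) (pd2 (pd2 g) x0) h2 : (ℝ × ℝ) →L[ℝ] (ℝ × ℝ))) x0 :=
    hasFDerivAt_shear (hdiffF hx0) h2
  have hFx0 : ContDiffAt ℝ (⊤ : ℕ∞) F x0 := hFc hx0
  set Φ : OpenPartialHomeomorph (ℝ × ℝ) (ℝ × ℝ) :=
    (hFx0.toOpenPartialHomeomorph F hA hone).restrOpen V hVopen with hΦdef
  have hΦcoe : (Φ : ℝ × ℝ → ℝ × ℝ) = F := rfl
  have hx0src : x0 ∈ Φ.source := by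
    rw [hΦdef, OpenPartialHomeomorph.restrOpen_source]
    exact ⟨hFx0.mem_toOpenPartialHomeomorph_source hA hone, hx0V⟩
  have hsrcV : Φ.source ⊆ V := by
    rw [hΦdef, OpenPartialHomeomorph.restrOpen_source]
    exact Set.inter_subset_right
  have hFx0eq : F x0 = (x0.1, 0) := by simp [hFdef, h1]
  have htgt0 : (x0.1, (0:ℝ)) ∈ Φ.target := by
    have := Φ.map_source hx0src
    rwa [hΦcoe, hFx0eq] at this
  obtain ⟨δ, hδ, hball⟩ := Metric.isOpen_iff.1 Φ.open_target _ htgt0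
  set γ₂ : ℝ → ℝ := fun t => (Φ.symm (t, 0)).2 with hγdef
  have hmemT : ∀ t ∈ Metric.ball x0.1 δ, ((t : ℝ), (0:ℝ)) ∈ Φ.target := by
    intro t ht
    apply hball
    rw [Metric.mem_ball] at ht ⊢
    rw [Prod.dist_eq]
    simpa [max_eq_left dist_nonneg] using ht
  have hkey : ∀ t ∈ Metric.ball x0.1 δ,
      Φ.symm (t, 0) = (t, γ₂ t) ∧ (t, γ₂ t) ∈ V ∧ pd2 g (t, γ₂ t) = 0 := by
    intro t ht
    have htT := hmemT t ht
    have hsrc : Φ.symm (t, 0) ∈ Φ.source := Φ.map_target htT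
    have hri : F (Φ.symm (t, 0)) = (t, 0) := by
      rw [← hΦcoe]; exact Φ.right_inv htT
    have hfst : (Φ.symm (t, 0)).1 = t := congrArg Prod.fst hri
    have heq : Φ.symm (t, 0) = (t, γ₂ t) := by
      rw [hγdef]; ext
      · exact hfst
      · rfl
    refine ⟨heq, heq ▸ hsrcV hsrc, ?_⟩
    have := congrArg Prod.snd hri
    simpa [hFdef, heq] using this
  have hmemU : ∀ t ∈ Metric.ball x0.1 δ, (t, γ₂ t) ∈ U := fun t ht =>
    hVsub (hkey t ht).2.1
  have hne : ∀ t ∈ Metric.ball x0.1 δ, pd2 (pd2 g) (t, γ₂ t) ≠ 0 := fun t ht =>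
    (hkey t ht).2.1.2
  have hzero : ∀ t ∈ Metric.ball x0.1 δ, pd2 g (t, γ₂ t) = 0 := fun t ht =>
    (hkey t ht).2.2
  have hγsmooth : ∀ t ∈ Metric.ball x0.1 δ, ContDiffAt ℝ (⊤ : ℕ∞) γ₂ t := by
    intro t ht
    have hz := hkey t ht
    have hzU : (t, γ₂ t) ∈ U := hVsub hz.2.1
    have h22 : pd2 (pd2 g) (t, γ₂ t) ≠ 0 := hz.2.1.2
    have hder : HasFDerivAt F
        ((shearEquiv (pd1 (pd2 g) (t, γ₂ t)) (pd2 (pd2 g) (t, γ₂ t)) h22 :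
          (ℝ × ℝ) →L[ℝ] (ℝ × ℝ))) (Φ.symm (t, 0)) := by
      rw [hz.1]
      exact hasFDerivAt_shear (hdiffF hzU) h22
    have hFat : ContDiffAt ℝ (⊤ : ℕ∞) F (Φ.symm (t, 0)) := by
      rw [hz.1]; exact hFc hzU
    have hsymm : ContDiffAt ℝ (⊤ : ℕ∞) Φ.symm (t, 0) :=
      Φ.contDiffAt_symm (hmemT t ht) hder hFat
    have hcurve : ContDiffAt ℝ (⊤ : ℕ∞) (fun s : ℝ => ((s : ℝ), (0:ℝ))) t :=
      (contDiff_id.prodMk contDiff_const).contDiffAt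
    have hc1 : ContDiffAt ℝ (⊤ : ℕ∞) (fun s : ℝ => Φ.symm (s, 0)) t :=
      ContDiffAt.comp t hsymm hcurve
    exact ContDiffAt.comp t contDiff_snd.contDiffAt hc1
  have hdγ : ∀ t ∈ Metric.ball x0.1 δ, HasDerivAt γ₂ (deriv γ₂ t) t := fun t ht =>
    (((hγsmooth t ht).differentiableAt hone)).hasDerivAt
  refine ⟨δ, hδ, γ₂, ?_, ?_, ?_⟩
  · exact fun t ht => (hγsmooth t ht).contDiffWithinAt
  · have : Φ.symm (x0.1, 0) = x0 := by
      rw [← hFx0eq, ← hΦcoe]; exact Φ.left_inv hx0src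
    rw [hγdef]
    simp only [this]
  · intro x₁ hx₁
    refine ⟨hmemU x₁ hx₁, hzero x₁ hx₁, ?_⟩
    -- relation from differentiating pd2 g along the curve
    have hrel : ∀ t ∈ Metric.ball x0.1 δ,
        pd1 (pd2 g) (t, γ₂ t) + deriv γ₂ t * pd2 (pd2 g) (t, γ₂ t) = 0 := by
      intro t ht
      have h := chain_rule hU hf2 (hmemU t ht) (hdγ t ht)
      have h0 : (fun s : ℝ => pd2 g (s, γ₂ s)) =ᶠ[nhds t] fun _ => (0:ℝ) :=
        Filter.eventually_of_mem (Metric.isOpen_ball.mem_nhds ht)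
          (fun s hs => hzero s hs)
      have h' : HasDerivAt (fun _ : ℝ => (0:ℝ))
          (pd1 (pd2 g) (t, γ₂ t) + deriv γ₂ t * pd2 (pd2 g) (t, γ₂ t)) t :=
        (Filter.EventuallyEq.hasDerivAt_iff h0).1 h
      exact (h'.unique (hasDerivAt_const t 0))
    have hφ' : ∀ t ∈ Metric.ball x0.1 δ,
        HasDerivAt (fun s : ℝ => g (s, γ₂ s)) (pd1 g (t, γ₂ t)) t := by
      intro t ht
      have h := chain_rule hU hg (hmemU t ht) (hdγ t ht)
      rwa [hzero t ht, mul_zero, add_zero] at h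
    have hd1 : deriv (fun s : ℝ => g (s, γ₂ s)) =ᶠ[nhds x₁]
        fun t => pd1 g (t, γ₂ t) :=
      Filter.eventually_of_mem (Metric.isOpen_ball.mem_nhds hx₁)
        (fun t ht => (hφ' t ht).deriv)
    rw [hd1.deriv_eq]
    have h2' := chain_rule hU hf1 (hmemU x₁ hx₁) (hdγ x₁ hx₁)
    rw [h2'.deriv]
    have hrel1 := hrel x₁ hx₁
    have hne1 := hne x₁ hx₁
    rw [hessDet, eq_div_iff hne1]
    linear_combination pd2 (pd1 g) (x₁, γ₂ x₁) * hrel1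
end

section
/- Let κ=(κ₁,κ₂) with κ₁,κ₂>0 and let f∈C^∞(ℝ²∖{0}) be κ-homogeneous of some degree. Suppose x⁰∈ℝ²∖{0} with x⁰₁>0, and n := ord f(x⁰) < ∞. Set b := x⁰₂ (x⁰₁)^{−κ₂/κ₁}. Then there exists an open neighborhood U of x⁰ which is invariant under all dilations δ_r, r>0, and a smooth κ-homogeneous function g on U with g(x⁰)≠0, such that f(x) = (x₂ − b x₁^{κ₂/κ₁})ⁿ g(x) for all x∈U. -/
open Real MeasureTheory Metric

lemma hasDerivAt_parametric (F : ℝ × ℝ → ℝ) (hF : ContDiff ℝ (⊤:ℕ∞) F) (y : ℝ) :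
    HasDerivAt (fun y : ℝ => ∫ t in (0:ℝ)..1, F (y, t))
      (∫ t in (0:ℝ)..1, fderiv ℝ F (y, t) (1, 0)) y := by
  set F' : ℝ × ℝ → ℝ := fun p => fderiv ℝ F p (1, 0) with hF'def
  have hF' : ContDiff ℝ (⊤:ℕ∞) F' :=
    (hF.fderiv_right (by exact_mod_cast le_top)).clm_apply contDiff_const
  have hdiffF : ∀ (x t : ℝ), HasDerivAt (fun x => F (x, t)) (F' (x, t)) x := by
    intro x t
    have h1 : HasDerivAt (fun x : ℝ => (x, t)) ((1:ℝ), (0:ℝ)) x :=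
      (hasDerivAt_id x).prodMk (hasDerivAt_const x t)
    exact ((hF.differentiable (by simp) (x, t)).hasFDerivAt).comp_hasDerivAt x h1
  have hK : IsCompact (closedBall y 1 ×ˢ Set.Icc (0:ℝ) 1) :=
    (isCompact_closedBall y 1).prod isCompact_Icc
  obtain ⟨C, hC⟩ := hK.exists_bound_of_continuousOn (hF'.continuous.continuousOn)
  have main := intervalIntegral.hasDerivAt_integral_of_dominated_loc_of_deriv_le
    (F := fun x t => F (x, t)) (F' := fun x t => F' (x, t)) (x₀ := y)
    (a := 0) (b := 1) (μ := volume) (bound := fun _ => C) (s := ball y 1) (ball_mem_nhds y one_pos)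
    (Filter.Eventually.of_forall fun x =>
      (hF.continuous.comp (continuous_const.prodMk continuous_id)).aestronglyMeasurable)
    ((hF.continuous.comp (continuous_const.prodMk continuous_id)).intervalIntegrable 0 1)
    ((hF'.continuous.comp (continuous_const.prodMk continuous_id)).aestronglyMeasurable)
    (ae_of_all _ (fun t ht x hx => by
      refine hC (x, t) ⟨ball_subset_closedBall hx, ?_⟩
      rw [Set.uIoc_of_le zero_le_one] at ht
      exact ⟨le_of_lt ht.1, ht.2⟩))
    (intervalIntegrable_const)
    (ae_of_all _ (fun t ht x hx => hdiffF x t))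
  exact main.2

lemma contDiff_parametric (F : ℝ × ℝ → ℝ) (hF : ContDiff ℝ (⊤:ℕ∞) F) :
    ContDiff ℝ (⊤:ℕ∞) (fun y : ℝ => ∫ t in (0:ℝ)..1, F (y, t)) := by
  suffices H : ∀ (k : ℕ) (G : ℝ × ℝ → ℝ), ContDiff ℝ (⊤:ℕ∞) G →
      ContDiff ℝ (k : ℕ∞) (fun y : ℝ => ∫ t in (0:ℝ)..1, G (y, t)) by
    rw [show ((⊤:ℕ∞) : WithTop ℕ∞) = (⊤:ℕ∞) from rfl]
    rw [contDiff_infty]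
    exact fun k => by exact_mod_cast H k F hF
  intro k
  induction k with
  | zero =>
    intro G hG
    rw [show ((0:ℕ) : ℕ∞) = 0 from rfl]
    exact contDiff_zero.mpr
      (intervalIntegral.continuous_parametric_intervalIntegral_of_continuous'
        (f := fun y t => G (y, t)) (hG.continuous) 0 1)
  | succ k ih =>
    intro G hG
    set G' : ℝ × ℝ → ℝ := fun p => fderiv ℝ G p (1, 0) with hG'def
    have hG' : ContDiff ℝ (⊤:ℕ∞) G' :=
      (hG.fderiv_right (by exact_mod_cast le_top)).clm_apply contDiff_const
    have hcast : ((k+1 : ℕ) : WithTop ℕ∞) = (k : WithTop ℕ∞) + 1 := by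
      push_cast; rfl
    rw [show (((k+1:ℕ)) : ℕ∞) = ((k+1:ℕ) : ℕ∞) from rfl]
    have : ContDiff ℝ ((k : WithTop ℕ∞) + 1) (fun y : ℝ => ∫ t in (0:ℝ)..1, G (y, t)) := by
      rw [contDiff_succ_iff_deriv]
      refine ⟨fun y => (hasDerivAt_parametric G hG y).differentiableAt, ?_, ?_⟩
      · intro h; exact absurd h (by simp)
      · have hde : deriv (fun y : ℝ => ∫ t in (0:ℝ)..1, G (y, t))
            = fun y : ℝ => ∫ t in (0:ℝ)..1, G' (y, t) := by
          funext y; exact (hasDerivAt_parametric G hG y).deriv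
        rw [hde]
        exact_mod_cast ih G' hG'
    exact_mod_cast this

lemma deriv_pow_factor (y0 : ℝ) :
    ∀ (k : ℕ) (ψ : ℝ → ℝ), ContDiff ℝ (⊤:ℕ∞) ψ →
      (∀ j < k, iteratedDeriv j (fun y => (y - y0) ^ k * ψ y) y0 = 0) ∧
      iteratedDeriv k (fun y => (y - y0) ^ k * ψ y) y0 = (k.factorial : ℝ) * ψ y0 := by
  intro k
  induction k with
  | zero =>
    intro ψ hψ
    refine ⟨fun j hj => by omega, by simp [iteratedDeriv_zero]⟩
  | succ k ih =>
    intro ψ hψ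
    set ψ' : ℝ → ℝ := fun y => (k+1 : ℝ) * ψ y + (y - y0) * deriv ψ y with hψ'def
    have hψ'sm : ContDiff ℝ (⊤:ℕ∞) ψ' := by
      have hd : ContDiff ℝ (⊤:ℕ∞) (deriv ψ) := by
        have := (contDiff_infty_iff_deriv.mp (by exact_mod_cast hψ)).2
        exact_mod_cast this
      exact (contDiff_const.mul hψ).add
        (((contDiff_id.sub contDiff_const)).mul hd)
    have hderiv : deriv (fun y => (y - y0) ^ (k+1) * ψ y)
        = fun y => (y - y0) ^ k * ψ' y := by
      funext y
      have h1 : HasDerivAt (fun y : ℝ => (y - y0) ^ (k+1))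
          ((k+1 : ℝ) * (y - y0) ^ k) y := by
        simpa using (((hasDerivAt_id y).sub_const y0).fun_pow (k+1))
      have h2 : HasDerivAt ψ (deriv ψ y) y :=
        (hψ.differentiable (by simp) y).hasDerivAt
      have := h1.fun_mul h2
      rw [this.deriv]
      simp only [hψ'def]; ring
    have key : (fun y => (y - y0) ^ (k+1) * ψ y) = fun y => (y - y0) ^ (k+1) * ψ y := rfl
    constructor
    · intro j hj
      rcases Nat.eq_zero_or_pos j with hj0 | hjp
      · subst hj0; simp [iteratedDeriv_zero]
      · obtain ⟨j', rfl⟩ := Nat.exists_eq_succ_of_ne_zero (Nat.pos_iff_ne_zero.mp hjp)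
        rw [iteratedDeriv_succ', hderiv]
        exact (ih ψ' hψ'sm).1 j' (by omega)
    · rw [iteratedDeriv_succ', hderiv, (ih ψ' hψ'sm).2]
      simp [hψ'def, Nat.factorial_succ]
      ring

lemma hadamard_step (ψ₀ : ℝ → ℝ) (hψ₀ : ContDiff ℝ (⊤:ℕ∞) ψ₀) (y0 : ℝ) (h0 : ψ₀ y0 = 0) :
    ∃ ψ : ℝ → ℝ, ContDiff ℝ (⊤:ℕ∞) ψ ∧ ∀ y, ψ₀ y = (y - y0) * ψ y := by
  have hd : ContDiff ℝ (⊤:ℕ∞) (deriv ψ₀) := by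
    have := (contDiff_infty_iff_deriv.mp (by exact_mod_cast hψ₀)).2
    exact_mod_cast this
  set F : ℝ × ℝ → ℝ := fun p => deriv ψ₀ (y0 + p.2 * (p.1 - y0)) with hFdef
  have hF : ContDiff ℝ (⊤:ℕ∞) F :=
    hd.comp (contDiff_const.add (contDiff_snd.mul (contDiff_fst.sub contDiff_const)))
  refine ⟨fun y => ∫ t in (0:ℝ)..1, F (y, t), contDiff_parametric F hF, fun y => ?_⟩
  have hline : ∀ t : ℝ, HasDerivAt (fun t : ℝ => y0 + t * (y - y0)) (y - y0) t := by
    intro t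
    simpa using ((hasDerivAt_id t).mul_const (y - y0)).const_add y0
  have hco : ∀ t : ℝ, HasDerivAt (fun t => ψ₀ (y0 + t * (y - y0)))
      (deriv ψ₀ (y0 + t * (y - y0)) * (y - y0)) t := by
    intro t
    exact ((hψ₀.differentiable (by simp) _).hasDerivAt).comp t (hline t)
  have hint : IntervalIntegrable (fun t => deriv ψ₀ (y0 + t * (y - y0)) * (y - y0))
      volume 0 1 := by
    apply Continuous.intervalIntegrable
    exact (hd.continuous.comp (by continuity)).mul continuous_const
  have := intervalIntegral.integral_eq_sub_of_hasDerivAt (fun t _ => hco t) hint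
  simp only [one_mul, zero_mul, add_zero, h0, sub_zero] at this
  rw [intervalIntegral.integral_mul_const, show y0 + (y - y0) = y by ring] at this
  simp only [hFdef]
  rw [← this]
  ring

lemma hadamard (h : ℝ → ℝ) (hh : ContDiff ℝ (⊤:ℕ∞) h) (y0 : ℝ) :
    ∀ (m : ℕ), (∀ j < m, iteratedDeriv j h y0 = 0) →
      ∃ ψ : ℝ → ℝ, ContDiff ℝ (⊤:ℕ∞) ψ ∧ ∀ y, h y = (y - y0) ^ m * ψ y := by
  intro m
  induction m with
  | zero => exact fun _ => ⟨h, hh, fun y => by simp⟩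
  | succ m ih =>
    intro hvan
    obtain ⟨ψ₀, hψ₀, hfac⟩ := ih (fun j hj => hvan j (by omega))
    have hψ₀0 : ψ₀ y0 = 0 := by
      have h1 : iteratedDeriv m h y0 = (m.factorial : ℝ) * ψ₀ y0 := by
        have := (deriv_pow_factor y0 m ψ₀ hψ₀).2
        rw [show (fun y => (y - y0) ^ m * ψ₀ y) = h from (funext fun y => (hfac y).symm)] at this
        exact this
      have h2 := hvan m (by omega)
      rw [h2] at h1
      have hfne : (m.factorial : ℝ) ≠ 0 := Nat.cast_ne_zero.mpr m.factorial_ne_zero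
      rcases mul_eq_zero.mp h1.symm with hc | hc
      · exact absurd hc hfne
      · exact hc
    obtain ⟨ψ, hψ, hstep⟩ := hadamard_step ψ₀ hψ₀ y0 hψ₀0
    refine ⟨ψ, hψ, fun y => ?_⟩
    rw [hfac y, hstep y, pow_succ]
    ring

lemma iteratedDeriv_comp_line (F : ℝ × ℝ → ℝ) (hF : ContDiff ℝ (⊤:ℕ∞) F) (a v : ℝ × ℝ) :
    ∀ (j : ℕ) (t : ℝ), iteratedDeriv j (fun s => F (a + s • v)) t
      = iteratedFDeriv ℝ j F (a + t • v) (fun _ => v) := by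
  intro j
  induction j with
  | zero => intro t; simp [iteratedDeriv_zero, iteratedFDeriv_zero_apply]
  | succ j ih =>
    intro t
    have hline : ∀ t : ℝ, HasDerivAt (fun s : ℝ => a + s • v) v t := by
      intro t
      simpa using ((hasDerivAt_id t).smul_const v).const_add a
    have hΦ : ContDiff ℝ 1 (iteratedFDeriv ℝ j F) :=
      hF.iteratedFDeriv_right (by exact_mod_cast le_top)
    have hd : ∀ t : ℝ, HasDerivAt (fun s => iteratedDeriv j (fun s => F (a + s • v)) s)
        ((fderiv ℝ (iteratedFDeriv ℝ j F) (a + t • v) v) (fun _ => v)) t := by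
      intro t
      have h1 : HasDerivAt (fun s : ℝ => iteratedFDeriv ℝ j F (a + s • v))
          (fderiv ℝ (iteratedFDeriv ℝ j F) (a + t • v) v) t :=
        (hΦ.differentiable one_ne_zero (a + t • v)).hasFDerivAt.comp_hasDerivAt t (hline t)
      have h2 := ((ContinuousMultilinearMap.apply ℝ (fun _ : Fin j => ℝ × ℝ) ℝ
          (fun _ => v)).hasFDerivAt.comp_hasDerivAt t h1)
      refine HasDerivAt.congr_of_eventuallyEq h2 ?_
      filter_upwards with s
      simp [ih s, Function.comp]
    rw [iteratedDeriv_succ]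
    rw [(hd t).deriv]
    rw [iteratedFDeriv_succ_apply_left]
    congr 1

lemma vanish_of_pow_factor (F : ℝ × ℝ → ℝ) (hF : ContDiff ℝ (⊤:ℕ∞) F)
    (x0 : ℝ × ℝ) (h0 : F x0 = 0) :
    ∀ (m : ℕ) (G : ℝ × ℝ → ℝ), ContDiff ℝ (⊤:ℕ∞) G →
      ∀ j < m, iteratedFDeriv ℝ j (fun x => F x ^ m * G x) x0 = 0 := by
  intro m
  induction m with
  | zero => intro G hG j hj; omega
  | succ m ih =>
    intro G hG j hj
    have hW : ContDiff ℝ (⊤:ℕ∞) (fun x => F x ^ m * G x) := (hF.pow m).mul hG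
    have hrw : (fun x => F x ^ (m+1) * G x) = fun x => F x * (F x ^ m * G x) := by
      funext x; ring
    rw [hrw]
    have hb := norm_iteratedFDeriv_mul_le (𝕜 := ℝ) (N := (⊤:ℕ∞)) hF hW x0
      (n := j) (by exact_mod_cast le_top)
    have hz : ∀ i ∈ Finset.range (j+1),
        (j.choose i : ℝ) * ‖iteratedFDeriv ℝ i F x0‖ *
          ‖iteratedFDeriv ℝ (j - i) (fun x => F x ^ m * G x) x0‖ = 0 := by
      intro i hi
      rcases Nat.eq_zero_or_pos i with hi0 | hip
      · subst hi0
        simp [norm_iteratedFDeriv_zero, h0]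
      · have hij := Finset.mem_range.mp hi
        have : j - i < m := by omega
        rw [ih G hG (j - i) this]
        simp
    rw [Finset.sum_eq_zero hz] at hb
    have := norm_le_zero_iff.mp hb
    exact this

lemma glue_smooth (c : ℝ) (hc : 0 < c) (φ : ℝ × ℝ → ℝ)
    (hφ : ∀ x : ℝ × ℝ, c/2 < x.1 → ContDiffAt ℝ (⊤:ℕ∞) φ x) :
    ContDiff ℝ (⊤:ℕ∞) fun x : ℝ × ℝ =>
      Real.smoothTransition ((x.1 - 5*c/8)/(c/8)) * φ x := by
  rw [contDiff_iff_contDiffAt]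
  intro x
  rcases lt_or_ge (c/2) x.1 with hx | hx
  · exact ((Real.smoothTransition.contDiff.comp
      ((contDiff_fst.sub contDiff_const).div_const _)).contDiffAt).mul (hφ x hx)
  · have hev : (fun x : ℝ × ℝ => Real.smoothTransition ((x.1 - 5*c/8)/(c/8)) * φ x)
        =ᶠ[nhds x] (fun _ => (0:ℝ)) := by
      have hop : IsOpen {p : ℝ × ℝ | p.1 < 5*c/8} := isOpen_lt continuous_fst continuous_const
      have hmem : x ∈ {p : ℝ × ℝ | p.1 < 5*c/8} := by
        simp only [Set.mem_setOf_eq]; linarith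
      filter_upwards [hop.mem_nhds hmem] with p hp
      have : Real.smoothTransition ((p.1 - 5*c/8)/(c/8)) = 0 :=
        Real.smoothTransition.zero_of_nonpos
          (div_nonpos_of_nonpos_of_nonneg
            (by have hp' : p.1 < 5*c/8 := hp; linarith) (by linarith))
      simp [this]
    exact contDiffAt_const.congr_of_eventuallyEq hev



/-- **local form of a `κ`-homogeneous function.** If `f` is `κ`-homogeneous of
degree `α`, smooth away from the origin, and has finite vanishing order `n` at a point `x⁰` with
`x⁰₁ > 0`, then on a dilation-invariant neighbourhood `U` of `x⁰` one has
`f(x) = (x₂ − b x₁^{κ₂/κ₁})ⁿ g(x)` with `g` smooth, `κ`-homogeneous and nonvanishing at `x⁰`,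
where `b = x⁰₂ (x⁰₁)^{−κ₂/κ₁}`. -/
theorem local_form_homogeneous
    (κ₁ κ₂ : ℝ) (hκ₁ : 0 < κ₁) (hκ₂ : 0 < κ₂) (α : ℝ)
    (f : ℝ × ℝ → ℝ)
    (hhom : ∀ x : ℝ × ℝ, x ≠ 0 → ∀ r : ℝ, 0 < r →
      f (r ^ κ₁ * x.1, r ^ κ₂ * x.2) = r ^ α * f x)
    (hsm : ContDiffOn ℝ (⊤ : ℕ∞) f {x : ℝ × ℝ | x ≠ 0})
    (x0 : ℝ × ℝ) (hx0 : 0 < x0.1)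
    (n : ℕ) (hn1 : ∀ j < n, iteratedFDeriv ℝ j f x0 = 0) (hn2 : iteratedFDeriv ℝ n f x0 ≠ 0) :
    ∃ U : Set (ℝ × ℝ), IsOpen U ∧ x0 ∈ U ∧
      (∀ x ∈ U, ∀ r : ℝ, 0 < r → ((r ^ κ₁ * x.1, r ^ κ₂ * x.2) : ℝ × ℝ) ∈ U) ∧
      ∃ g : ℝ × ℝ → ℝ, ContDiffOn ℝ (⊤ : ℕ∞) g U ∧ g x0 ≠ 0 ∧
        (∃ β : ℝ, ∀ x ∈ U, ∀ r : ℝ, 0 < r →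
          g (r ^ κ₁ * x.1, r ^ κ₂ * x.2) = r ^ β * g x) ∧
        ∀ x ∈ U, f x = (x.2 - x0.2 * x0.1 ^ (-(κ₂ / κ₁)) * x.1 ^ (κ₂ / κ₁)) ^ n * g x := by
  set c : ℝ := x0.1 with hcdef
  set y0 : ℝ := x0.2 with hy0def
  have hcpos : 0 < c := hx0
  set γ : ℝ := κ₂ / κ₁ with hγdef
  set χ : ℝ → ℝ := fun t => Real.smoothTransition ((t - 5*c/8)/(c/8)) with hχdef
  have hχ1 : ∀ t : ℝ, 3*c/4 ≤ t → χ t = 1 := by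
    intro t ht
    apply Real.smoothTransition.one_of_one_le
    rw [le_div_iff₀ (by linarith)]
    linarith
  set ftil : ℝ × ℝ → ℝ := fun x => χ x.1 * f x with hftildef
  have hopenV : IsOpen {p : ℝ × ℝ | 3*c/4 < p.1} := isOpen_lt continuous_const continuous_fst
  have hx0V : x0 ∈ {p : ℝ × ℝ | 3*c/4 < p.1} := by
    simp only [Set.mem_setOf_eq]; linarith
  have hagree : ∀ x : ℝ × ℝ, 3*c/4 < x.1 → ftil x = f x := by
    intro x hx
    simp only [hftildef, hχ1 x.1 hx.le, one_mul]
  have hne0 : ∀ x : ℝ × ℝ, 0 < x.1 → x ≠ 0 := by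
    intro x hx h0
    rw [h0] at hx
    exact lt_irrefl 0 hx
  have hftil : ContDiff ℝ (⊤:ℕ∞) ftil := by
    apply glue_smooth c hcpos
    intro x hx
    exact hsm.contDiffAt (isOpen_compl_singleton.mem_nhds (hne0 x (by linarith)))
  -- the sliced function
  set h : ℝ → ℝ := fun s => ftil (((c:ℝ), (0:ℝ)) + s • (((0:ℝ), (1:ℝ)) : ℝ × ℝ)) with hhdef
  have hhsm : ContDiff ℝ (⊤:ℕ∞) h :=
    hftil.comp (contDiff_const.add (contDiff_id.smul contDiff_const))
  have hpt : ∀ s : ℝ, ((c:ℝ), (0:ℝ)) + s • (((0:ℝ), (1:ℝ)) : ℝ × ℝ) = (c, s) := by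
    intro s
    ext <;> simp
  have hheval : ∀ s : ℝ, h s = f (c, s) := by
    intro s
    simp only [hhdef, hpt s]
    exact hagree (c, s) (by simp only []; linarith)
  have hx0eq : ((c:ℝ), y0) = x0 := by
    rw [hcdef, hy0def]
  -- local agreement of iterated derivatives
  have iter_congr : ∀ (u v : ℝ × ℝ → ℝ) (j : ℕ), (∀ y : ℝ × ℝ, 3*c/4 < y.1 → u y = v y) →
      iteratedFDeriv ℝ j u x0 = iteratedFDeriv ℝ j v x0 := by
    intro u v j huv
    rw [← iteratedFDerivWithin_univ, ← iteratedFDerivWithin_univ]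
    apply Filter.EventuallyEq.iteratedFDerivWithin_eq
    · rw [nhdsWithin_univ]
      filter_upwards [hopenV.mem_nhds hx0V] with p hp
      exact huv p hp
    · exact huv x0 hx0V
  -- transfer of derivatives to the slice
  have hDh : ∀ j : ℕ, iteratedDeriv j h y0 = iteratedFDeriv ℝ j f x0 (fun _ => ((0:ℝ),(1:ℝ))) := by
    intro j
    rw [hhdef]
    rw [iteratedDeriv_comp_line ftil hftil _ _ j y0]
    rw [hpt y0, hx0eq]
    rw [iter_congr ftil f j (fun y hy => hagree y hy)]
  have hvan : ∀ j < n, iteratedDeriv j h y0 = 0 := by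
    intro j hj
    rw [hDh j, hn1 j hj]
    rfl
  -- the key factorization computation
  have key : ∀ (k : ℕ) (ψk : ℝ → ℝ), (∀ s, h s = (s - y0) ^ k * ψk s) →
      ∀ x : ℝ × ℝ, 0 < x.1 →
      f x = (x.2 - y0 * c ^ (-γ) * x.1 ^ γ) ^ k *
        ((x.1/c) ^ (α/κ₁) * ((x.1/c) ^ (-γ)) ^ k * ψk (x.2 * (x.1/c) ^ (-γ))) := by
    intro k ψk hfac x hx
    set d : ℝ := x.1 / c with hddef
    have hd : 0 < d := div_pos hx hcpos
    set r : ℝ := d ^ (1/κ₁) with hrdef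
    have hr : 0 < r := Real.rpow_pos_of_pos hd _
    have hr1 : r ^ κ₁ = d := by
      rw [hrdef, ← Real.rpow_mul hd.le, one_div_mul_cancel hκ₁.ne', Real.rpow_one]
    have hx1 : r ^ κ₁ * c = x.1 := by
      rw [hr1, hddef]
      field_simp
    set yx : ℝ := x.2 * d ^ (-γ) with hyxdef
    have e1 : d ^ (-γ) * d ^ γ = 1 := by
      rw [← Real.rpow_add hd]; simp
    have e2 : c ^ (-γ) * c ^ γ = 1 := by
      rw [← Real.rpow_add hcpos]; simp
    have hrκ₂ : r ^ κ₂ = d ^ γ := by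
      rw [hrdef, ← Real.rpow_mul hd.le, hγdef]
      congr 1
      field_simp
    have hx2 : r ^ κ₂ * yx = x.2 := by
      rw [hrκ₂, hyxdef, show d ^ γ * (x.2 * d ^ (-γ)) = x.2 * (d ^ (-γ) * d ^ γ) by ring,
        e1, mul_one]
    have hcyx : (((c:ℝ), yx) : ℝ × ℝ) ≠ 0 := hne0 (c, yx) hcpos
    have hf1 : f x = r ^ α * f (c, yx) := by
      calc f x = f (r ^ κ₁ * c, r ^ κ₂ * yx) := by rw [hx1, hx2]
        _ = r ^ α * f (c, yx) := hhom (c, yx) hcyx r hr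
    have hf2 : f (c, yx) = (yx - y0) ^ k * ψk yx := by
      rw [← hheval yx, hfac yx]
    have hxc : x.1 ^ γ = d ^ γ * c ^ γ := by
      rw [show x.1 = d * c by rw [hddef]; field_simp, Real.mul_rpow hd.le hcpos.le]
    have hyy : yx - y0 = d ^ (-γ) * (x.2 - y0 * c ^ (-γ) * x.1 ^ γ) := by
      rw [hyxdef, hxc]
      linear_combination y0 * (d ^ (-γ) * d ^ γ) * e2 + y0 * e1
    have hrα : r ^ α = d ^ (α/κ₁) := by
      rw [hrdef, ← Real.rpow_mul hd.le]
      congr 1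
      field_simp
    rw [hf1, hf2, hyy, hrα, mul_pow]
    ring
  -- Step B : the n-th derivative of h does not vanish
  have hn' : iteratedDeriv n h y0 ≠ 0 := by
    intro hcon
    have hvan' : ∀ j < n+1, iteratedDeriv j h y0 = 0 := by
      intro j hj
      rcases Nat.lt_succ_iff_lt_or_eq.mp hj with hj' | rfl
      · exact hvan j hj'
      · exact hcon
    obtain ⟨ψh, hψh, hfach⟩ := hadamard h hhsm y0 (n+1) hvan'
    set Fh : ℝ × ℝ → ℝ := fun x => x.2 - (y0 * c ^ (-γ)) * (χ x.1 * x.1 ^ γ) with hFhdef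
    have hFhsm : ContDiff ℝ (⊤:ℕ∞) Fh := by
      refine contDiff_snd.sub (contDiff_const.mul ?_)
      apply glue_smooth c hcpos
      intro x hx
      exact (Real.contDiffAt_rpow_const_of_ne (by nlinarith : x.1 ≠ 0)).comp x
        contDiff_fst.contDiffAt
    have e2 : c ^ (-γ) * c ^ γ = 1 := by
      rw [← Real.rpow_add hcpos]; simp
    have hFh0 : Fh x0 = 0 := by
      simp only [hFhdef]
      rw [← hcdef, ← hy0def, hχ1 c (by linarith), one_mul]
      linear_combination (-y0) * e2
    set Gh : ℝ × ℝ → ℝ := fun x =>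
      χ x.1 * ((x.1/c) ^ (α/κ₁) * ((x.1/c) ^ (-γ)) ^ (n+1) * ψh (x.2 * (x.1/c) ^ (-γ)))
      with hGhdef
    have hGhsm : ContDiff ℝ (⊤:ℕ∞) Gh := by
      apply glue_smooth c hcpos
      intro x hx
      have hxne : x.1/c ≠ 0 := ne_of_gt (div_pos (by linarith) hcpos)
      have hbase : ContDiffAt ℝ (⊤:ℕ∞) (fun p : ℝ × ℝ => p.1/c) x :=
        (contDiff_fst.div_const c).contDiffAt
      have h1 : ContDiffAt ℝ (⊤:ℕ∞) (fun p : ℝ × ℝ => (p.1/c) ^ (α/κ₁)) x :=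
        (Real.contDiffAt_rpow_const_of_ne (p := α/κ₁) hxne).comp (g := fun y : ℝ => y ^ (α/κ₁)) x hbase
      have h2 : ContDiffAt ℝ (⊤:ℕ∞) (fun p : ℝ × ℝ => (p.1/c) ^ (-γ)) x :=
        (Real.contDiffAt_rpow_const_of_ne (p := -γ) hxne).comp (g := fun y : ℝ => y ^ (-γ)) x hbase
      have h3 : ContDiffAt ℝ (⊤:ℕ∞) (fun p : ℝ × ℝ => ψh (p.2 * (p.1/c) ^ (-γ))) x :=
        hψh.contDiffAt.comp x (contDiff_snd.contDiffAt.mul h2)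
      exact (h1.mul (h2.pow _)).mul h3
    have hfact : ∀ y : ℝ × ℝ, 3*c/4 < y.1 → f y = Fh y ^ (n+1) * Gh y := by
      intro y hy
      have hypos : 0 < y.1 := by linarith
      rw [key (n+1) ψh hfach y hypos]
      simp only [hFhdef, hGhdef, hχ1 y.1 hy.le, one_mul]
    have hzero := vanish_of_pow_factor Fh hFhsm x0 hFh0 (n+1) Gh hGhsm n (Nat.lt_succ_self n)
    refine hn2 ?_
    rw [iter_congr f (fun x => Fh x ^ (n+1) * Gh x) n hfact]
    exact hzero
  -- final construction
  obtain ⟨ψ, hψsm, hψfac⟩ := hadamard h hhsm y0 n hvan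
  have hψ0 : ψ y0 ≠ 0 := by
    have h1 := (deriv_pow_factor y0 n ψ hψsm).2
    rw [show (fun y => (y - y0) ^ n * ψ y) = h from (funext fun y => (hψfac y).symm)] at h1
    intro hc0
    rw [hc0, mul_zero] at h1
    exact hn' h1
  refine ⟨{x : ℝ × ℝ | 0 < x.1}, isOpen_lt continuous_const continuous_fst, hx0, ?_, ?_⟩
  · intro x hx r hr
    exact mul_pos (Real.rpow_pos_of_pos hr κ₁) hx
  · refine ⟨fun x => (x.1/c) ^ (α/κ₁) * ((x.1/c) ^ (-γ)) ^ n * ψ (x.2 * (x.1/c) ^ (-γ)),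
      ?_, ?_, ⟨α - n * κ₂, ?_⟩, ?_⟩
    · -- smoothness on U
      intro x hx
      have hx1 : 0 < x.1 := hx
      have hxne : x.1/c ≠ 0 := ne_of_gt (div_pos hx1 hcpos)
      have hbase : ContDiffAt ℝ (⊤:ℕ∞) (fun p : ℝ × ℝ => p.1/c) x :=
        (contDiff_fst.div_const c).contDiffAt
      have h1 : ContDiffAt ℝ (⊤:ℕ∞) (fun p : ℝ × ℝ => (p.1/c) ^ (α/κ₁)) x :=
        (Real.contDiffAt_rpow_const_of_ne (p := α/κ₁) hxne).comp (g := fun y : ℝ => y ^ (α/κ₁)) x hbase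
      have h2 : ContDiffAt ℝ (⊤:ℕ∞) (fun p : ℝ × ℝ => (p.1/c) ^ (-γ)) x :=
        (Real.contDiffAt_rpow_const_of_ne (p := -γ) hxne).comp (g := fun y : ℝ => y ^ (-γ)) x hbase
      have h3 : ContDiffAt ℝ (⊤:ℕ∞) (fun p : ℝ × ℝ => ψ (p.2 * (p.1/c) ^ (-γ))) x :=
        hψsm.contDiffAt.comp x (contDiff_snd.contDiffAt.mul h2)
      exact ((h1.mul (h2.pow _)).mul h3).contDiffWithinAt
    · -- nonvanishing at x0
      have hone : x0.1 / c = 1 := by rw [← hcdef]; exact div_self hcpos.ne'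
      simp only [hone, Real.one_rpow, one_pow, mul_one, one_mul, ← hy0def]
      exact hψ0
    · -- homogeneity
      intro x hx r hr
      have hd : 0 < x.1/c := div_pos hx hcpos
      have hrκ : 0 < r ^ κ₁ := Real.rpow_pos_of_pos hr _
      have Hpow : ∀ θ : ℝ, ((r ^ κ₁ * x.1)/c) ^ θ = r ^ (κ₁*θ) * (x.1/c) ^ θ := by
        intro θ
        rw [mul_div_assoc, Real.mul_rpow hrκ.le hd.le, Real.rpow_mul hr.le]
      have e3 : r ^ κ₂ * r ^ (κ₁ * (-γ)) = 1 := by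
        rw [show κ₁ * (-γ) = -κ₂ by rw [hγdef]; field_simp, ← Real.rpow_add hr]
        simp
      beta_reduce
      have harg : r ^ κ₂ * x.2 * (r ^ (κ₁ * (-γ)) * (x.1/c) ^ (-γ))
          = x.2 * (x.1/c) ^ (-γ) := by
        linear_combination x.2 * ((x.1/c) ^ (-γ)) * e3
      rw [Hpow (α/κ₁), Hpow (-γ), harg, mul_pow,
        ← Real.rpow_natCast (r ^ (κ₁ * (-γ))) n, ← Real.rpow_mul hr.le,
        show κ₁ * (α/κ₁) = α by field_simp,
        show κ₁ * (-γ) * (n:ℝ) = -((n:ℝ) * κ₂) by rw [hγdef]; field_simp,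
        show r ^ (α - (n:ℝ) * κ₂) = r ^ α * r ^ (-((n:ℝ) * κ₂)) by
          rw [← Real.rpow_add hr]; ring_nf]
      ring
    · -- factorization
      intro x hx
      exact key n ψ hψfac x hx
end

section
/- Let κ=(κ₁,κ₂) with κ₁,κ₂>0 and let f be κ-homogeneous of degree 1 and smooth away from the origin. Let x∈ℝ²∖{0} and j∈{1,2}. If κ_j≠1 and ∂_jf(x)≠0, then either det D²f(x)≠0 or ∂²_{jj}f(x)≠0. -/
open Real

/-- Euler identity for a function homogeneous of degree α at x. -/
lemma euler_aux (κ₁ κ₂ α : ℝ) (g : ℝ × ℝ → ℝ) (x : ℝ × ℝ)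
    (hg : DifferentiableAt ℝ g x)
    (hhom : ∀ r : ℝ, 0 < r → g (r ^ κ₁ * x.1, r ^ κ₂ * x.2) = r ^ α * g x) :
    κ₁ * x.1 * pd1 g x + κ₂ * x.2 * pd2 g x = α * g x := by
  have h1 : HasDerivAt (fun r : ℝ => r ^ κ₁ * x.1) (κ₁ * x.1) 1 := by
    have := (Real.hasDerivAt_rpow_const (x := (1:ℝ)) (p := κ₁) (Or.inl one_ne_zero)).mul_const x.1
    simpa using this
  have h2 : HasDerivAt (fun r : ℝ => r ^ κ₂ * x.2) (κ₂ * x.2) 1 := by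
    have := (Real.hasDerivAt_rpow_const (x := (1:ℝ)) (p := κ₂) (Or.inl one_ne_zero)).mul_const x.2
    simpa using this
  have hδ : HasDerivAt (fun r : ℝ => ((r ^ κ₁ * x.1, r ^ κ₂ * x.2) : ℝ × ℝ))
      ((κ₁ * x.1, κ₂ * x.2) : ℝ × ℝ) 1 := h1.prodMk h2
  have hpt : x = ((1:ℝ) ^ κ₁ * x.1, (1:ℝ) ^ κ₂ * x.2) := by simp
  have hgx : HasFDerivAt g (fderiv ℝ g x) ((1:ℝ) ^ κ₁ * x.1, (1:ℝ) ^ κ₂ * x.2) :=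
    hpt ▸ hg.hasFDerivAt
  have hcomp : HasDerivAt (fun r : ℝ => g (r ^ κ₁ * x.1, r ^ κ₂ * x.2))
      (fderiv ℝ g x (κ₁ * x.1, κ₂ * x.2)) 1 := hgx.comp_hasDerivAt 1 hδ
  have hpow : HasDerivAt (fun r : ℝ => r ^ α * g x) (α * g x) 1 := by
    have := (Real.hasDerivAt_rpow_const (x := (1:ℝ)) (p := α) (Or.inl one_ne_zero)).mul_const (g x)
    simpa using this
  have heq : (fun r : ℝ => g (r ^ κ₁ * x.1, r ^ κ₂ * x.2)) =ᶠ[nhds 1]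
      (fun r : ℝ => r ^ α * g x) := by
    filter_upwards [eventually_gt_nhds one_pos] with r hr using hhom r hr
  have := (hcomp.congr_of_eventuallyEq heq.symm).unique hpow
  have hv : ((κ₁ * x.1, κ₂ * x.2) : ℝ × ℝ)
      = (κ₁ * x.1) • ((1:ℝ), (0:ℝ)) + (κ₂ * x.2) • ((0:ℝ), (1:ℝ)) := by
    simp [Prod.ext_iff]
  rw [hv, map_add, map_smul, map_smul] at this
  simpa [pd1, pd2, smul_eq_mul] using this

/-- The dilation as a continuous linear map. -/
noncomputable def dil (a b : ℝ) : (ℝ × ℝ) →L[ℝ] (ℝ × ℝ) :=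
  (a • (ContinuousLinearMap.fst ℝ ℝ ℝ)).prod (b • (ContinuousLinearMap.snd ℝ ℝ ℝ))

@[simp] lemma dil_apply (a b : ℝ) (y : ℝ × ℝ) : dil a b y = (a * y.1, b * y.2) := rfl

/-- The partial derivatives of a homogeneous function are homogeneous. -/
lemma fderiv_homog (κ₁ κ₂ : ℝ) (hκ₁ : 0 < κ₁) (hκ₂ : 0 < κ₂)
    (f : ℝ × ℝ → ℝ)
    (hhom : ∀ x : ℝ × ℝ, x ≠ 0 → ∀ r : ℝ, 0 < r →
      f (r ^ κ₁ * x.1, r ^ κ₂ * x.2) = r * f x)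
    (hsm : ContDiffOn ℝ (⊤ : ℕ∞) f {x : ℝ × ℝ | x ≠ 0})
    (x : ℝ × ℝ) (hx : x ≠ 0) (r : ℝ) (hr : 0 < r) :
    pd1 f (r ^ κ₁ * x.1, r ^ κ₂ * x.2) = r ^ (1 - κ₁) * pd1 f x ∧
    pd2 f (r ^ κ₁ * x.1, r ^ κ₂ * x.2) = r ^ (1 - κ₂) * pd2 f x := by
  have hopen : IsOpen {x : ℝ × ℝ | x ≠ 0} := isOpen_ne
  have hdf : ∀ y : ℝ × ℝ, y ≠ 0 → DifferentiableAt ℝ f y := fun y hy =>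
    (hsm.contDiffAt (hopen.mem_nhds hy)).differentiableAt (by simp)
  have hp1 : (0:ℝ) < r ^ κ₁ := Real.rpow_pos_of_pos hr κ₁
  have hp2 : (0:ℝ) < r ^ κ₂ := Real.rpow_pos_of_pos hr κ₂
  have hδx : ((r ^ κ₁ * x.1, r ^ κ₂ * x.2) : ℝ × ℝ) ≠ 0 := by
    intro h
    apply hx
    rw [Prod.ext_iff] at h ⊢
    constructor
    · exact (mul_eq_zero.1 h.1).resolve_left hp1.ne'
    · exact (mul_eq_zero.1 h.2).resolve_left hp2.ne'
  have heq : (fun y : ℝ × ℝ => f (dil (r ^ κ₁) (r ^ κ₂) y)) =ᶠ[nhds x]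
      (fun y => r * f y) := by
    filter_upwards [hopen.mem_nhds hx] with y hy
    simpa using hhom y hy r hr
  have hfd := Filter.EventuallyEq.fderiv_eq (𝕜 := ℝ) heq
  have hL : fderiv ℝ (fun y : ℝ × ℝ => f (dil (r ^ κ₁) (r ^ κ₂) y)) x =
      (fderiv ℝ f (dil (r ^ κ₁) (r ^ κ₂) x)).comp (dil (r ^ κ₁) (r ^ κ₂)) := by
    rw [show (fun y : ℝ × ℝ => f (dil (r ^ κ₁) (r ^ κ₂) y)) = f ∘ (dil (r ^ κ₁) (r ^ κ₂)) from rfl]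
    rw [fderiv_comp x (hdf _ (by simpa using hδx)) (dil (r ^ κ₁) (r ^ κ₂)).differentiableAt,
      ContinuousLinearMap.fderiv]
  have hR : fderiv ℝ (fun y : ℝ × ℝ => r * f y) x = r • fderiv ℝ f x :=
    fderiv_const_mul (hdf x hx) r
  rw [hL, hR] at hfd
  have e1 := congrArg (fun L : (ℝ × ℝ) →L[ℝ] ℝ => L ((1:ℝ), (0:ℝ))) hfd
  have e2 := congrArg (fun L : (ℝ × ℝ) →L[ℝ] ℝ => L ((0:ℝ), (1:ℝ))) hfd
  simp only [ContinuousLinearMap.comp_apply, ContinuousLinearMap.smul_apply, dil_apply,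
    mul_one, mul_zero] at e1 e2
  have k1 : ((r ^ κ₁, (0:ℝ)) : ℝ × ℝ) = (r ^ κ₁) • ((1:ℝ), (0:ℝ)) := by simp [Prod.ext_iff]
  have k2 : (((0:ℝ), r ^ κ₂) : ℝ × ℝ) = (r ^ κ₂) • ((0:ℝ), (1:ℝ)) := by simp [Prod.ext_iff]
  rw [k1, map_smul] at e1
  rw [k2, map_smul] at e2
  have hr1 : r ^ (1 - κ₁) = r / r ^ κ₁ := by rw [Real.rpow_sub hr, Real.rpow_one]
  have hr2 : r ^ (1 - κ₂) = r / r ^ κ₂ := by rw [Real.rpow_sub hr, Real.rpow_one]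
  constructor
  · rw [pd1, pd1, hr1]
    field_simp
    simpa [smul_eq_mul, mul_comm] using e1
  · rw [pd2, pd2, hr2]
    field_simp
    simpa [smul_eq_mul, mul_comm] using e2

/-- Let `f` be `κ`-homogeneous of degree 1 and smooth away from the origin,
`x ≠ 0` and `j ∈ {1,2}`. If `κ_j ≠ 1` and `∂_j f(x) ≠ 0`, then either `det D²f(x) ≠ 0` or
`∂²_{jj} f(x) ≠ 0`. -/
theorem nondegenerate_or_second_derivative
    (κ₁ κ₂ : ℝ) (hκ₁ : 0 < κ₁) (hκ₂ : 0 < κ₂)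
    (f : ℝ × ℝ → ℝ)
    (hhom : ∀ x : ℝ × ℝ, x ≠ 0 → ∀ r : ℝ, 0 < r →
      f (r ^ κ₁ * x.1, r ^ κ₂ * x.2) = r * f x)
    (hsm : ContDiffOn ℝ (⊤ : ℕ∞) f {x : ℝ × ℝ | x ≠ 0})
    (x : ℝ × ℝ) (hx : x ≠ 0) :
    (κ₁ ≠ 1 → pd1 f x ≠ 0 → hessDet f x ≠ 0 ∨ pd1 (pd1 f) x ≠ 0) ∧
    (κ₂ ≠ 1 → pd2 f x ≠ 0 → hessDet f x ≠ 0 ∨ pd2 (pd2 f) x ≠ 0) := by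
  have hopen : IsOpen {x : ℝ × ℝ | x ≠ 0} := isOpen_ne
  have hca : ContDiffAt ℝ (⊤ : ℕ∞) f x := hsm.contDiffAt (hopen.mem_nhds hx)
  have hdf' : DifferentiableAt ℝ (fderiv ℝ f) x :=
    (hca.fderiv_right (m := 1) (WithTop.coe_le_coe.2 le_top)).differentiableAt one_ne_zero
  have hg1 : DifferentiableAt ℝ (pd1 f) x := by
    have : DifferentiableAt ℝ (fun y => fderiv ℝ f y ((1:ℝ), (0:ℝ))) x :=
      hdf'.clm_apply (differentiableAt_const _)
    exact this
  have hg2 : DifferentiableAt ℝ (pd2 f) x := by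
    have : DifferentiableAt ℝ (fun y => fderiv ℝ f y ((0:ℝ), (1:ℝ))) x :=
      hdf'.clm_apply (differentiableAt_const _)
    exact this
  have E1 : κ₁ * x.1 * pd1 (pd1 f) x + κ₂ * x.2 * pd2 (pd1 f) x = (1 - κ₁) * pd1 f x :=
    euler_aux κ₁ κ₂ (1 - κ₁) (pd1 f) x hg1 (fun r hr =>
      (fderiv_homog κ₁ κ₂ hκ₁ hκ₂ f hhom hsm x hx r hr).1)
  have E2 : κ₁ * x.1 * pd1 (pd2 f) x + κ₂ * x.2 * pd2 (pd2 f) x = (1 - κ₂) * pd2 f x :=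
    euler_aux κ₁ κ₂ (1 - κ₂) (pd2 f) x hg2 (fun r hr =>
      (fderiv_homog κ₁ κ₂ hκ₁ hκ₂ f hhom hsm x hx r hr).2)
  have hsymm : IsSymmSndFDerivAt ℝ f x := hca.isSymmSndFDerivAt (by rw [minSmoothness_of_isRCLikeNormedField]; exact WithTop.coe_le_coe.2 (le_top : (2:ℕ∞) ≤ ⊤))
  have hflip1 : fderiv ℝ (pd1 f) x = (fderiv ℝ (fderiv ℝ f) x).flip ((1:ℝ), (0:ℝ)) := by
    have := fderiv_clm_apply (c := fderiv ℝ f) (u := fun _ => ((1:ℝ), (0:ℝ))) (x := x)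
      hdf' (differentiableAt_const _)
    rw [show pd1 f = fun y => fderiv ℝ f y ((1:ℝ), (0:ℝ)) from rfl]
    simpa using this
  have hflip2 : fderiv ℝ (pd2 f) x = (fderiv ℝ (fderiv ℝ f) x).flip ((0:ℝ), (1:ℝ)) := by
    have := fderiv_clm_apply (c := fderiv ℝ f) (u := fun _ => ((0:ℝ), (1:ℝ))) (x := x)
      hdf' (differentiableAt_const _)
    rw [show pd2 f = fun y => fderiv ℝ f y ((0:ℝ), (1:ℝ)) from rfl]
    simpa using this
  have hsym : pd2 (pd1 f) x = pd1 (pd2 f) x := by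
    have h := hsymm ((0:ℝ), (1:ℝ)) ((1:ℝ), (0:ℝ))
    simp only [pd1, pd2, hflip1, hflip2, ContinuousLinearMap.flip_apply]
    exact h
  constructor
  · intro hκ hp
    by_contra hcon
    push_neg at hcon
    obtain ⟨hdet, hA⟩ := hcon
    rw [hessDet, hA, zero_mul, zero_sub, neg_eq_zero, ← hsym, mul_self_eq_zero] at hdet
    rw [hA, hdet] at E1
    have : (1 - κ₁) * pd1 f x ≠ 0 := mul_ne_zero (sub_ne_zero.2 (Ne.symm hκ)) hp
    exact this (by linarith)
  · intro hκ hp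
    by_contra hcon
    push_neg at hcon
    obtain ⟨hdet, hD⟩ := hcon
    rw [hessDet, hD, mul_zero, zero_sub, neg_eq_zero, hsym, mul_self_eq_zero] at hdet
    rw [hdet, hD] at E2
    have : (1 - κ₂) * pd2 f x ≠ 0 := mul_ne_zero (sub_ne_zero.2 (Ne.symm hκ)) hp
    exact this (by linarith)
end

section
/- Let κ=(κ₁,κ₂) with κ₁,κ₂>0 and κ₂≠1, and let f be κ-homogeneous of degree 1, smooth away from the origin, with ord(Hess f)<∞. Let x⁰∈ℝ²∖{0} be such that σ⁰ := −∂₂f(x⁰) ≠ 0 and ∂²₂₂f(x⁰) ≠ 0. Then there exist an open neighborhood U of (x⁰₁,σ⁰) in ℝ² and a smooth function γ on U such that for all (x₁,σ)∈U: the function x₂ ↦ f(x₁,x₂)+σx₂ has a nondegenerate critical point at x₂=γ(x₁,σ) (i.e. ∂₂f(x₁,γ(x₁,σ))+σ=0 and ∂²₂₂f(x₁,γ(x₁,σ))≠0), and moreover, for each σ with (x⁰₁,σ)∈U, the function x₁ ↦ f(x₁,γ(x₁,σ))+σγ(x₁,σ) does not vanish of infinite order at x₁=x⁰₁, i.e.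 some derivative of this function of x₁ (of some finite order ≥0) is nonzero at x⁰₁. -/
open Real Filter Topology

section AuxiliaryLemmas
open Filter Topology

lemma clm_decomp (L : ℝ × ℝ →L[ℝ] ℝ) (u v : ℝ) :
    L (u, v) = u * L (1, 0) + v * L (0, 1) := by
  have h : ((u, v) : ℝ × ℝ) = u • ((1:ℝ), (0:ℝ)) + v • ((0:ℝ), (1:ℝ)) := by
    simp [Prod.ext_iff]
  rw [h, map_add, map_smul, map_smul, smul_eq_mul, smul_eq_mul]

lemma fderiv_apply_contDiffAt {f : ℝ × ℝ → ℝ} {x : ℝ × ℝ}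
    (hf : ContDiffAt ℝ ((⊤:ℕ∞) : WithTop ℕ∞) f x) (e : ℝ × ℝ) :
    ContDiffAt ℝ ((⊤:ℕ∞) : WithTop ℕ∞) (fun y => fderiv ℝ f y e) x := by
  have h1 : ContDiffAt ℝ ((⊤:ℕ∞) : WithTop ℕ∞) (fderiv ℝ f) x :=
    hf.fderiv_right (by exact_mod_cast le_refl _)
  exact ((ContinuousLinearMap.apply ℝ ℝ e).contDiff.contDiffAt).comp x h1

lemma pd2_contDiffAt {f : ℝ × ℝ → ℝ} {x : ℝ × ℝ}
    (hf : ContDiffAt ℝ ((⊤:ℕ∞) : WithTop ℕ∞) f x) :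
    ContDiffAt ℝ ((⊤:ℕ∞) : WithTop ℕ∞) (pd2 f) x :=
  fderiv_apply_contDiffAt hf (0, 1)

lemma pd1_contDiffAt {f : ℝ × ℝ → ℝ} {x : ℝ × ℝ}
    (hf : ContDiffAt ℝ ((⊤:ℕ∞) : WithTop ℕ∞) f x) :
    ContDiffAt ℝ ((⊤:ℕ∞) : WithTop ℕ∞) (pd1 f) x :=
  fderiv_apply_contDiffAt hf (1, 0)

lemma top_one_le : ((⊤:ℕ∞) : WithTop ℕ∞) ≠ 0 := by simp

lemma euler_id {κ₁ κ₂ : ℝ} {f : ℝ × ℝ → ℝ}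
    (hhom : ∀ x : ℝ × ℝ, x ≠ 0 → ∀ r : ℝ, 0 < r →
      f (r ^ κ₁ * x.1, r ^ κ₂ * x.2) = r * f x)
    (hfat : ∀ x : ℝ × ℝ, x ≠ 0 → ContDiffAt ℝ ((⊤:ℕ∞) : WithTop ℕ∞) f x)
    {x : ℝ × ℝ} (hx : x ≠ 0) :
    κ₁ * x.1 * pd1 f x + κ₂ * x.2 * pd2 f x = f x := by
  have hc1 : HasDerivAt (fun r : ℝ => r ^ κ₁ * x.1) (κ₁ * x.1) 1 := by
    simpa using (Real.hasDerivAt_rpow_const (x := 1) (p := κ₁) (Or.inl one_ne_zero)).mul_const x.1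
  have hc2 : HasDerivAt (fun r : ℝ => r ^ κ₂ * x.2) (κ₂ * x.2) 1 := by
    simpa using (Real.hasDerivAt_rpow_const (x := 1) (p := κ₂) (Or.inl one_ne_zero)).mul_const x.2
  have hcurve : HasDerivAt (fun r : ℝ => ((r ^ κ₁ * x.1, r ^ κ₂ * x.2) : ℝ × ℝ))
      ((κ₁ * x.1, κ₂ * x.2) : ℝ × ℝ) 1 := hc1.prodMk hc2
  have hc1x : ((1:ℝ) ^ κ₁ * x.1, (1:ℝ) ^ κ₂ * x.2) = x := by simp
  have hfd : HasFDerivAt f (fderiv ℝ f x) x :=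
    ((hfat x hx).differentiableAt top_one_le).hasFDerivAt
  have h1 : HasDerivAt (fun r : ℝ => f (r ^ κ₁ * x.1, r ^ κ₂ * x.2))
      (fderiv ℝ f x ((κ₁ * x.1, κ₂ * x.2) : ℝ × ℝ)) 1 := by
    have := (hc1x ▸ hfd).comp_hasDerivAt 1 hcurve
    simpa [Function.comp_def] using this
  have h2 : HasDerivAt (fun r : ℝ => r * f x) (f x) 1 := by
    simpa using (hasDerivAt_id (1:ℝ)).mul_const (f x)
  have heq : (fun r : ℝ => f (r ^ κ₁ * x.1, r ^ κ₂ * x.2)) =ᶠ[𝓝 (1:ℝ)]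
      (fun r : ℝ => r * f x) := by
    filter_upwards [Ioi_mem_nhds (show (0:ℝ) < 1 by norm_num)] with r hr
    exact hhom x hx r hr
  have := (h1.congr_of_eventuallyEq heq.symm).unique h2
  rw [← this, clm_decomp]
  rfl

lemma pd2_hom {κ₁ κ₂ : ℝ} {f : ℝ × ℝ → ℝ}
    (hhom : ∀ x : ℝ × ℝ, x ≠ 0 → ∀ r : ℝ, 0 < r →
      f (r ^ κ₁ * x.1, r ^ κ₂ * x.2) = r * f x)
    (hfat : ∀ x : ℝ × ℝ, x ≠ 0 → ContDiffAt ℝ ((⊤:ℕ∞) : WithTop ℕ∞) f x)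
    {x : ℝ × ℝ} (hx : x ≠ 0) {r : ℝ} (hr : 0 < r) :
    pd2 f (r ^ κ₁ * x.1, r ^ κ₂ * x.2) = r ^ (1 - κ₂) * pd2 f x := by
  have hk1 : (0:ℝ) < r ^ κ₁ := Real.rpow_pos_of_pos hr _
  have hk2 : (0:ℝ) < r ^ κ₂ := Real.rpow_pos_of_pos hr _
  set z : ℝ × ℝ := (r ^ κ₁ * x.1, r ^ κ₂ * x.2) with hz
  have hzne : z ≠ 0 := by
    intro h
    apply hx
    have h1 : r ^ κ₁ * x.1 = 0 := congrArg Prod.fst h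
    have h2 : r ^ κ₂ * x.2 = 0 := congrArg Prod.snd h
    have : x.1 = 0 := by
      rcases mul_eq_zero.1 h1 with h | h
      · exact absurd h hk1.ne'
      · exact h
    have h2' : x.2 = 0 := by
      rcases mul_eq_zero.1 h2 with h | h
      · exact absurd h hk2.ne'
      · exact h
    exact Prod.ext this h2'
  -- the scaling continuous linear map
  set S : (ℝ × ℝ) →L[ℝ] (ℝ × ℝ) :=
    ((r ^ κ₁) • ContinuousLinearMap.fst ℝ ℝ ℝ).prod ((r ^ κ₂) • ContinuousLinearMap.snd ℝ ℝ ℝ)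
    with hS
  have hSapp : ∀ y : ℝ × ℝ, S y = (r ^ κ₁ * y.1, r ^ κ₂ * y.2) := by
    intro y; simp [hS]
  have hSd : HasFDerivAt (fun y : ℝ × ℝ => ((r ^ κ₁ * y.1, r ^ κ₂ * y.2) : ℝ × ℝ)) S x := by
    have := S.hasFDerivAt (x := x)
    exact this.congr_of_eventuallyEq (Eventually.of_forall fun y => (hSapp y).symm)
  have hfz : HasFDerivAt f (fderiv ℝ f z) z :=
    ((hfat z hzne).differentiableAt top_one_le).hasFDerivAt
  have h1 : HasFDerivAt (fun y : ℝ × ℝ => f (r ^ κ₁ * y.1, r ^ κ₂ * y.2))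
      ((fderiv ℝ f z).comp S) x := by
    exact HasFDerivAt.comp x (hz ▸ hfz) hSd
  have h2 : HasFDerivAt (fun y : ℝ × ℝ => r * f y) (r • fderiv ℝ f x) x := by
    have := (((hfat x hx).differentiableAt top_one_le).hasFDerivAt).const_smul r
    exact this
  have heq : (fun y : ℝ × ℝ => f (r ^ κ₁ * y.1, r ^ κ₂ * y.2)) =ᶠ[𝓝 x]
      (fun y : ℝ × ℝ => r * f y) := by
    filter_upwards [IsOpen.mem_nhds isOpen_ne hx] with y hy
    exact hhom y hy r hr
  have huniq : (fderiv ℝ f z).comp S = r • fderiv ℝ f x :=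
    (h1.congr_of_eventuallyEq heq.symm).unique h2
  have happ := congrFun (congrArg (fun (L : (ℝ × ℝ) →L[ℝ] ℝ) => (L : ℝ × ℝ → ℝ)) huniq) ((0:ℝ),(1:ℝ))
  simp only [ContinuousLinearMap.coe_comp', Function.comp_apply, ContinuousLinearMap.coe_smul',
    Pi.smul_apply, smul_eq_mul] at happ
  rw [hSapp] at happ
  simp only [mul_zero, mul_one] at happ
  -- happ : fderiv ℝ f z (0, r ^ κ₂) = r * fderiv ℝ f x (0, 1)
  have h01 : ((0:ℝ), r ^ κ₂) = (r ^ κ₂) • ((0:ℝ), (1:ℝ)) := by simp [Prod.ext_iff]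
  rw [h01, map_smul, smul_eq_mul] at happ
  have hfin : pd2 f z = r ^ (1 - κ₂) * pd2 f x := by
    have hrk : r ^ (1 - κ₂) = r / r ^ κ₂ := by
      rw [Real.rpow_sub hr, Real.rpow_one]
    rw [hrk]
    field_simp [pd2]
    unfold pd2
    linarith [happ]
  exact hfin

lemma shear_equiv (L : ℝ × ℝ →L[ℝ] ℝ) (hL : L (0, 1) ≠ 0) :
    ∃ A : (ℝ × ℝ) ≃L[ℝ] (ℝ × ℝ),
      (A : (ℝ × ℝ) →L[ℝ] (ℝ × ℝ)) = (ContinuousLinearMap.fst ℝ ℝ ℝ).prod L := by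
  set F1 : (ℝ × ℝ) →L[ℝ] (ℝ × ℝ) := (ContinuousLinearMap.fst ℝ ℝ ℝ).prod L with hF1
  set F2 : (ℝ × ℝ) →L[ℝ] (ℝ × ℝ) := (ContinuousLinearMap.fst ℝ ℝ ℝ).prod
      ((L (0,1))⁻¹ • (ContinuousLinearMap.snd ℝ ℝ ℝ - L (1,0) • ContinuousLinearMap.fst ℝ ℝ ℝ))
      with hF2
  have h1 : Function.LeftInverse F2 F1 := by
    intro y
    have hLy : L y = y.1 * L (1,0) + y.2 * L (0,1) := by
      rw [← clm_decomp]
    simp only [hF1, hF2, ContinuousLinearMap.prod_apply, ContinuousLinearMap.coe_fst',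
      ContinuousLinearMap.smul_apply, ContinuousLinearMap.coe_sub', Pi.sub_apply,
      ContinuousLinearMap.coe_snd', smul_eq_mul]
    refine Prod.ext rfl ?_
    simp only [hLy]
    field_simp
    ring
  have h2 : Function.RightInverse F2 F1 := by
    intro y
    simp only [hF1, hF2, ContinuousLinearMap.prod_apply, ContinuousLinearMap.coe_fst',
      ContinuousLinearMap.smul_apply, ContinuousLinearMap.coe_sub', Pi.sub_apply,
      ContinuousLinearMap.coe_snd', smul_eq_mul]
    refine Prod.ext rfl ?_
    rw [clm_decomp L]
    field_simp
    ring
  exact ⟨ContinuousLinearEquiv.equivOfInverse F1 F2 h1 h2, rfl⟩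

end AuxiliaryLemmas

/-- Let `f` be `κ`-homogeneous of degree 1 (`κ₂ ≠ 1`), smooth away from the
origin, with `ord(Hess f) < ∞`. If `σ⁰ := −∂₂f(x⁰) ≠ 0` and `∂²₂₂f(x⁰) ≠ 0`, then there is a
smooth function `γ(x₁,σ)` near `(x⁰₁,σ⁰)` parametrizing nondegenerate critical points of
`x₂ ↦ f(x₁,x₂)+σx₂`, and `x₁ ↦ f(x₁,γ(x₁,σ))+σγ(x₁,σ)` does not vanish of infinite order at
`x⁰₁`. -/
theorem critical_point_family_finite_order
    (κ₁ κ₂ : ℝ) (hκ₁ : 0 < κ₁) (hκ₂ : 0 < κ₂) (hκ₂1 : κ₂ ≠ 1)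
    (f : ℝ × ℝ → ℝ)
    (hhom : ∀ x : ℝ × ℝ, x ≠ 0 → ∀ r : ℝ, 0 < r →
      f (r ^ κ₁ * x.1, r ^ κ₂ * x.2) = r * f x)
    (hsm : ContDiffOn ℝ (⊤ : ℕ∞) f {x : ℝ × ℝ | x ≠ 0})
    (hHess : ∃ N : ℕ, ∀ x : ℝ × ℝ, x ≠ 0 → ∃ j ≤ N, iteratedFDeriv ℝ j (hessDet f) x ≠ 0)
    (x0 : ℝ × ℝ) (hx0 : x0 ≠ 0)
    (hσ : pd2 f x0 ≠ 0) (h22 : pd2 (pd2 f) x0 ≠ 0) :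
    ∃ U : Set (ℝ × ℝ), IsOpen U ∧ ((x0.1, -pd2 f x0) : ℝ × ℝ) ∈ U ∧
      ∃ γ : ℝ × ℝ → ℝ, ContDiffOn ℝ (⊤ : ℕ∞) γ U ∧
        γ (x0.1, -pd2 f x0) = x0.2 ∧
        (∀ q ∈ U, pd2 f (q.1, γ q) + q.2 = 0 ∧ pd2 (pd2 f) (q.1, γ q) ≠ 0) ∧
        ∀ σ : ℝ, ((x0.1, σ) : ℝ × ℝ) ∈ U →
          ∃ k : ℕ, iteratedDeriv k (fun x₁ : ℝ => f (x₁, γ (x₁, σ)) + σ * γ (x₁, σ)) x0.1 ≠ 0 := by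
  classical
  have hopen : IsOpen {x : ℝ × ℝ | x ≠ 0} := isOpen_ne
  have hfat : ∀ x : ℝ × ℝ, x ≠ 0 → ContDiffAt ℝ ((⊤:ℕ∞) : WithTop ℕ∞) f x := fun x hx =>
    hsm.contDiffAt (hopen.mem_nhds hx)
  have hpd2at : ∀ x : ℝ × ℝ, x ≠ 0 → ContDiffAt ℝ ((⊤:ℕ∞) : WithTop ℕ∞) (pd2 f) x :=
    fun x hx => pd2_contDiffAt (hfat x hx)
  -- the good set W
  set W : Set (ℝ × ℝ) := {x | x ≠ 0 ∧ pd2 (pd2 f) x ≠ 0} with hWdef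
  have hWopen : IsOpen W := by
    have hcont : ContinuousOn (pd2 (pd2 f)) {x : ℝ × ℝ | x ≠ 0} := fun x hx =>
      ((pd2_contDiffAt (hpd2at x hx)).continuousAt).continuousWithinAt
    have heq : W = {x : ℝ × ℝ | x ≠ 0} ∩ (pd2 (pd2 f)) ⁻¹' {y : ℝ | y ≠ 0} := by
      ext x; simp [hWdef]
    rw [heq]
    exact hcont.isOpen_inter_preimage hopen isOpen_ne
  have hx0W : x0 ∈ W := ⟨hx0, h22⟩
  -- the folding map Φ
  set Φ : ℝ × ℝ → ℝ × ℝ := fun x => (x.1, -pd2 f x) with hΦdef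
  have hΦat : ∀ b ∈ W, ContDiffAt ℝ ((⊤:ℕ∞) : WithTop ℕ∞) Φ b := by
    intro b hb
    exact (contDiff_fst.contDiffAt).prodMk (hpd2at b hb.1).neg
  have key : ∀ b ∈ W, ∃ A : (ℝ × ℝ) ≃L[ℝ] (ℝ × ℝ),
      HasFDerivAt Φ (A : (ℝ × ℝ) →L[ℝ] (ℝ × ℝ)) b := by
    intro b hb
    set g2 : ℝ × ℝ → ℝ := fun x => -pd2 f x with hg2def
    have hg2 : ContDiffAt ℝ ((⊤:ℕ∞) : WithTop ℕ∞) g2 b := (hpd2at b hb.1).neg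
    set L : (ℝ × ℝ) →L[ℝ] ℝ := fderiv ℝ g2 b with hLdef
    have hL01 : L (0, 1) ≠ 0 := by
      have hdiff : DifferentiableAt ℝ (pd2 f) b := (hpd2at b hb.1).differentiableAt top_one_le
      have : fderiv ℝ g2 b = -fderiv ℝ (pd2 f) b := by
        rw [hg2def]
        exact fderiv_neg
      rw [hLdef, this]
      simpa [pd2] using hb.2
    obtain ⟨A, hA⟩ := shear_equiv L hL01
    refine ⟨A, ?_⟩
    rw [hA]
    exact (hasFDerivAt_fst).prodMk ((hg2.differentiableAt top_one_le).hasFDerivAt)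
  obtain ⟨A0, hA0⟩ := key x0 hx0W
  have hΦ0 := hΦat x0 hx0W
  set Ψ : OpenPartialHomeomorph (ℝ × ℝ) (ℝ × ℝ) := hΦ0.toOpenPartialHomeomorph Φ hA0 top_one_le with hΨdef
  have hΨcoe : (Ψ : ℝ × ℝ → ℝ × ℝ) = Φ := rfl
  have hx0src : x0 ∈ Ψ.source := hΦ0.mem_toOpenPartialHomeomorph_source hA0 top_one_le
  have hq0tgt : Φ x0 ∈ Ψ.target := hΦ0.image_mem_toOpenPartialHomeomorph_target hA0 top_one_le
  have hsymm0 : Ψ.symm (Φ x0) = x0 := by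
    have := Ψ.left_inv hx0src
    rwa [hΨcoe] at this
  -- smoothness of the inverse at good points
  have hsymm : ∀ y ∈ Ψ.target, Ψ.symm y ∈ W →
      ContDiffAt ℝ ((⊤:ℕ∞) : WithTop ℕ∞) Ψ.symm y := by
    intro y hy hbW
    obtain ⟨A, hA⟩ := key _ hbW
    have hbsrc : Ψ.symm y ∈ Ψ.source := Ψ.map_target hy
    have hΦb := hΦat _ hbW
    have hby : Φ (Ψ.symm y) = y := by
      have := Ψ.right_inv hy
      rwa [hΨcoe] at this
    have hloc := hΦb.to_localInverse (f' := A) hA top_one_le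
    rw [hby] at hloc
    refine hloc.congr_of_eventuallyEq ?_
    have hstrict := hΦb.hasStrictFDerivAt' hA top_one_le
    have hg : ∀ᶠ x in 𝓝 (Ψ.symm y), Ψ.symm (Φ x) = x := by
      filter_upwards [Ψ.open_source.mem_nhds hbsrc] with x hxs
      have := Ψ.left_inv hxs
      rwa [hΨcoe] at this
    have huniq := hstrict.localInverse_unique hg
    rw [hby] at huniq
    exact huniq
  -- the open set U and function γ
  set U : Set (ℝ × ℝ) := (Ψ.target ∩ Ψ.symm ⁻¹' W) ∩ {q : ℝ × ℝ | q.2 ≠ 0} with hUdef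
  have hUopen : IsOpen U := by
    apply IsOpen.inter
    · exact Ψ.symm.continuousOn.isOpen_inter_preimage Ψ.open_target hWopen
    · exact isOpen_ne_fun continuous_snd continuous_const
  have hq0mem : ((x0.1, -pd2 f x0) : ℝ × ℝ) ∈ U := by
    have hq0 : ((x0.1, -pd2 f x0) : ℝ × ℝ) = Φ x0 := rfl
    refine ⟨⟨?_, ?_⟩, ?_⟩
    · rw [hq0]; exact hq0tgt
    · show Ψ.symm _ ∈ W
      rw [hq0, hsymm0]; exact hx0W
    · show -pd2 f x0 ≠ 0
      exact neg_ne_zero.2 hσ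
  set γ : ℝ × ℝ → ℝ := fun q => (Ψ.symm q).2 with hγdef
  have hUW : ∀ q ∈ U, Ψ.symm q ∈ W := fun q hq => hq.1.2
  have hUtgt : ∀ q ∈ U, q ∈ Ψ.target := fun q hq => hq.1.1
  have hUne : ∀ q ∈ U, q.2 ≠ 0 := fun q hq => hq.2
  have hPq : ∀ q ∈ U, ((q.1, γ q) : ℝ × ℝ) = Ψ.symm q := by
    intro q hq
    have hby : Φ (Ψ.symm q) = q := by
      have := Ψ.right_inv (hUtgt q hq)
      rwa [hΨcoe] at this
    have h1 := congrArg Prod.fst hby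
    simp only [hΦdef] at h1
    exact Prod.ext h1.symm rfl
  have hγsm : ContDiffOn ℝ (⊤ : ℕ∞) γ U := by
    intro q hq
    exact ((contDiff_snd.contDiffAt).comp q
      (hsymm q (hUtgt q hq) (hUW q hq))).contDiffWithinAt
  have hγ0 : γ (x0.1, -pd2 f x0) = x0.2 := by
    have hq0 : ((x0.1, -pd2 f x0) : ℝ × ℝ) = Φ x0 := rfl
    rw [hγdef]
    simp only [hq0, hsymm0]
  have hcrit : ∀ q ∈ U, pd2 f (q.1, γ q) + q.2 = 0 ∧ pd2 (pd2 f) (q.1, γ q) ≠ 0 := by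
    intro q hq
    have hby : Φ (Ψ.symm q) = q := by
      have := Ψ.right_inv (hUtgt q hq)
      rwa [hΨcoe] at this
    constructor
    · have h2 := congrArg Prod.snd hby
      simp only [hΦdef] at h2
      rw [hPq q hq]
      linarith [h2]
    · rw [hPq q hq]
      exact (hUW q hq).2
  refine ⟨U, hUopen, hq0mem, γ, hγsm, hγ0, hcrit, ?_⟩
  intro σ hqU
  by_contra hcon
  push_neg at hcon
  set c : ℝ := x0.1 with hcdef
  set G : ℝ → ℝ := fun t => f (t, γ (t, σ)) + σ * γ (t, σ) with hGdef
  have hσ0 : σ ≠ 0 := hUne _ hqU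
  set s : Set ℝ := {t : ℝ | ((t, σ) : ℝ × ℝ) ∈ U} with hsdef
  have hsopen : IsOpen s := hUopen.preimage (continuous_id.prodMk continuous_const)
  have hcs : c ∈ s := hqU
  set γs : ℝ → ℝ := fun t => γ (t, σ) with hγsdef
  have hPW : ∀ t ∈ s, ((t, γs t) : ℝ × ℝ) ∈ W := by
    intro t ht
    have := hPq _ ht
    rw [hγsdef]
    rw [show ((t, γ (t, σ)) : ℝ × ℝ) = ((((t,σ) : ℝ × ℝ).1, γ (t,σ)) : ℝ × ℝ) from rfl, this]
    exact hUW _ ht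
  have hPne : ∀ t ∈ s, ((t, γs t) : ℝ × ℝ) ≠ 0 := fun t ht => (hPW t ht).1
  have hγsat : ∀ t ∈ s, ContDiffAt ℝ ((⊤:ℕ∞) : WithTop ℕ∞) γs t := by
    intro t ht
    have h1 : ContDiffAt ℝ ((⊤:ℕ∞) : WithTop ℕ∞) γ (t, σ) :=
      (contDiff_snd.contDiffAt).comp _ (hsymm _ (hUtgt _ ht) (hUW _ ht))
    have := h1.comp t ((contDiffAt_id).prodMk contDiffAt_const : ContDiffAt ℝ ((⊤:ℕ∞) : WithTop ℕ∞) (fun u : ℝ => ((u, σ) : ℝ × ℝ)) t)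
    exact this
  have hγsd : ∀ t ∈ s, HasDerivAt γs (deriv γs t) t := fun t ht =>
    ((hγsat t ht).differentiableAt top_one_le).hasDerivAt
  have hcurve : ∀ t ∈ s, HasDerivAt (fun u : ℝ => ((u, γs u) : ℝ × ℝ)) ((1:ℝ), deriv γs t) t :=
    fun t ht => (hasDerivAt_id t).prodMk (hγsd t ht)
  have hpd2P : ∀ t ∈ s, pd2 f (t, γs t) = -σ := by
    intro t ht
    have := (hcrit _ ht).1
    have h2 : pd2 f (t, γs t) + σ = 0 := this
    linarith
  have hG' : ∀ t ∈ s, HasDerivAt G (pd1 f (t, γs t)) t := by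
    intro t ht
    have hfd : HasFDerivAt f (fderiv ℝ f (t, γs t)) (t, γs t) :=
      ((hfat _ (hPne t ht)).differentiableAt top_one_le).hasFDerivAt
    have h1 : HasDerivAt (fun u => f (u, γs u)) (fderiv ℝ f (t, γs t) ((1:ℝ), deriv γs t)) t :=
      hfd.comp_hasDerivAt t (hcurve t ht)
    have h2 : HasDerivAt (fun u => σ * γs u) (σ * deriv γs t) t := (hγsd t ht).const_mul σ
    have h3 := h1.add h2
    have hval : fderiv ℝ f (t, γs t) ((1:ℝ), deriv γs t) + σ * deriv γs t = pd1 f (t, γs t) := by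
      rw [clm_decomp]
      rw [show fderiv ℝ f (t, γs t) ((0:ℝ),(1:ℝ)) = -σ from hpd2P t ht]
      simp only [pd1]
      ring
    rw [hval] at h3
    exact h3
  have hG0 : G c = 0 := by
    have := hcon 0
    rwa [iteratedDeriv_zero] at this
  have hG1 : deriv G c = 0 := by
    have := hcon 1
    rwa [iteratedDeriv_one] at this
  have hG2 : deriv (deriv G) c = 0 := by
    have := hcon 2
    rw [show (2:ℕ) = 1 + 1 from rfl, iteratedDeriv_succ, iteratedDeriv_one] at this
    exact this
  have hpd1c : pd1 f (c, γs c) = 0 := by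
    rw [← (hG' c hcs).deriv]
    exact hG1
  have heuc := euler_id hhom hfat (hPne c hcs)
  have hfc : f (c, γs c) = G c - σ * γs c := by
    rw [hGdef]; ring
  have hγsc0 : γs c = 0 := by
    simp only at heuc
    rw [hpd1c, hpd2P c hcs, hfc, hG0] at heuc
    have h2 : σ * γs c * (κ₂ - 1) = 0 := by linear_combination -heuc
    rcases mul_eq_zero.1 h2 with h | h
    · rcases mul_eq_zero.1 h with h' | h'
      · exact absurd h' hσ0
      · exact h'
    · exact absurd (by linarith : κ₂ = 1) hκ₂1
  have hcne : c ≠ 0 := by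
    intro h
    exact hPne c hcs (by rw [hγsc0, h]; rfl)
  -- second derivative information: deriv γs c = 0
  set D : ℝ → ℝ := fun t => pd1 f (t, γs t) with hDdef
  have hDG : deriv G =ᶠ[𝓝 c] D := by
    filter_upwards [hsopen.mem_nhds hcs] with t ht
    exact (hG' t ht).deriv
  have hDc0 : D c = 0 := hpd1c
  have hderivDc : deriv D c = 0 := by
    rw [← hDG.deriv_eq]
    exact hG2
  have hDdiffAt : DifferentiableAt ℝ D c := by
    have h1 : ContDiffAt ℝ ((⊤:ℕ∞) : WithTop ℕ∞) (pd1 f) (c, γs c) :=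
      pd1_contDiffAt (hfat _ (hPne c hcs))
    exact ((h1.differentiableAt top_one_le).hasFDerivAt.comp_hasDerivAt c
      (hcurve c hcs)).differentiableAt
  have hDd0 : HasDerivAt D 0 c := hderivDc ▸ hDdiffAt.hasDerivAt
  have hγflat : deriv γs c = 0 := by
    have heq : γs =ᶠ[𝓝 c] fun t => (κ₁ * t * D t - G t) / ((κ₂ - 1) * σ) := by
      filter_upwards [hsopen.mem_nhds hcs] with t ht
      have heut := euler_id hhom hfat (hPne t ht)
      simp only at heut
      rw [hpd2P t ht, (by rw [hGdef]; ring : f (t, γs t) = G t - σ * γs t)] at heut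
      have hden : (κ₂ - 1) * σ ≠ 0 := mul_ne_zero (sub_ne_zero.2 hκ₂1) hσ0
      field_simp
      linear_combination -heut
    have hRd : HasDerivAt (fun t => (κ₁ * t * D t - G t) / ((κ₂ - 1) * σ)) 0 c := by
      have h1 : HasDerivAt (fun t : ℝ => κ₁ * t) κ₁ c := by
        simpa using (hasDerivAt_id c).const_mul κ₁
      have h2 := h1.mul hDd0
      have h3 := (h2.sub (hG' c hcs)).div_const ((κ₂ - 1) * σ)
      refine HasDerivAt.congr_deriv h3 ?_
      rw [show pd1 f (c, γs c) = D c from rfl, hDc0]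
      ring
    rw [heq.deriv_eq, hRd.deriv]
  -- mixed derivative vanishes at (c, 0)
  have hconst : (fun t => pd2 f (t, γs t)) =ᶠ[𝓝 c] fun _ => -σ := by
    filter_upwards [hsopen.mem_nhds hcs] with t ht
    exact hpd2P t ht
  have hp2d : HasDerivAt (fun t => pd2 f (t, γs t))
      (fderiv ℝ (pd2 f) (c, γs c) ((1:ℝ), deriv γs c)) c :=
    by simpa [Function.comp_def] using (((pd2_contDiffAt (hfat _ (hPne c hcs))).differentiableAt
      top_one_le).hasFDerivAt).comp_hasDerivAt c (hcurve c hcs)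
  have h0 : fderiv ℝ (pd2 f) (c, γs c) ((1:ℝ), deriv γs c) = 0 := by
    rw [← hp2d.deriv, hconst.deriv_eq, deriv_const]
  have hpd12 : pd1 (pd2 f) ((c : ℝ), (0 : ℝ)) = 0 := by
    rw [clm_decomp, hγflat] at h0
    have h1 : pd1 (pd2 f) (c, γs c) = 0 := by
      have := h0
      simp only [one_mul, zero_mul, add_zero] at this
      exact this
    rwa [hγsc0] at h1
  -- contradiction via homogeneity along the x₁-axis
  have hcne0 : (((c : ℝ), (0 : ℝ)) : ℝ × ℝ) ≠ 0 := by
    simp [Prod.ext_iff, hcne]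
  have hc0 : pd2 f ((c : ℝ), (0 : ℝ)) = -σ := by
    have := hpd2P c hcs
    rwa [hγsc0] at this
  have hhom2 : ∀ r : ℝ, 0 < r → pd2 f (r ^ κ₁ * c, (0:ℝ)) = r ^ (1 - κ₂) * (-σ) := by
    intro r hr
    have h1 := pd2_hom hhom hfat hcne0 hr
    simpa [hc0] using h1
  have hρ : HasDerivAt (fun r : ℝ => ((r ^ κ₁ * c, (0:ℝ)) : ℝ × ℝ)) (((κ₁ * c : ℝ), (0:ℝ)) : ℝ × ℝ) 1 := by
    have h1 : HasDerivAt (fun r : ℝ => r ^ κ₁ * c) (κ₁ * c) 1 := by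
      simpa using (Real.hasDerivAt_rpow_const (x := 1) (p := κ₁) (Or.inl one_ne_zero)).mul_const c
    exact h1.prodMk (hasDerivAt_const 1 0)
  have hc1 : (((1:ℝ) ^ κ₁ * c, (0:ℝ)) : ℝ × ℝ) = ((c : ℝ), (0 : ℝ)) := by simp
  have hfd2 : HasFDerivAt (pd2 f) (fderiv ℝ (pd2 f) ((c : ℝ), (0 : ℝ))) ((c : ℝ), (0 : ℝ)) :=
    ((pd2_contDiffAt (hfat _ hcne0)).differentiableAt top_one_le).hasFDerivAt
  have hL : HasDerivAt (fun r : ℝ => pd2 f (r ^ κ₁ * c, (0:ℝ)))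
      (fderiv ℝ (pd2 f) ((c : ℝ), (0 : ℝ)) (((κ₁ * c : ℝ), (0:ℝ)) : ℝ × ℝ)) 1 := by
    have := (hc1 ▸ hfd2).comp_hasDerivAt 1 hρ
    simpa [Function.comp_def] using this
  have hR : HasDerivAt (fun r : ℝ => r ^ (1 - κ₂) * (-σ)) ((1 - κ₂) * (-σ)) 1 := by
    simpa using (Real.hasDerivAt_rpow_const (x := 1) (p := 1 - κ₂)
      (Or.inl one_ne_zero)).mul_const (-σ)
  have heqr : (fun r : ℝ => pd2 f (r ^ κ₁ * c, (0:ℝ))) =ᶠ[𝓝 (1:ℝ)]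
      fun r => r ^ (1 - κ₂) * (-σ) := by
    filter_upwards [Ioi_mem_nhds (show (0:ℝ) < 1 by norm_num)] with r hr
    exact hhom2 r hr
  have hfinal := (hL.congr_of_eventuallyEq heqr.symm).unique hR
  rw [clm_decomp] at hfinal
  rw [show fderiv ℝ (pd2 f) (((c:ℝ),(0:ℝ)) : ℝ × ℝ) ((1:ℝ),(0:ℝ)) = 0 from hpd12] at hfinal
  have hzero : (0:ℝ) = (1 - κ₂) * (-σ) := by
    rw [← hfinal]
    ring
  have hne : (1 - κ₂) * (-σ) ≠ 0 :=
    mul_ne_zero (fun h => hκ₂1 (by linarith)) (neg_ne_zero.2 hσ0)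
  exact hne hzero.symm
end

section
/- Let κ=(κ₁,κ₂) with κ₁,κ₂>0 and let f be κ-homogeneous of degree 1 and smooth away from the origin, such that ord f(x) < ∞ for every x on the unit circle S¹. Then the set {x∈S¹ : ∇f(x)=0} is finite. -/
set_option maxHeartbeats 1000000
open Real Set

/-- zeros of g accumulate at θ₀ -/
def AccZ (θ₀ : ℝ) (g : ℝ → ℝ) : Prop :=
  ∀ ε > (0:ℝ), ∃ t, t ≠ θ₀ ∧ |t - θ₀| < ε ∧ g t = 0

/-- all derivatives of g vanish at θ₀ -/
def QQ (θ₀ : ℝ) (g : ℝ → ℝ) : Prop := ∀ n, iteratedDeriv n g θ₀ = 0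

lemma smooth_iteratedDeriv {g : ℝ → ℝ} (hg : ContDiff ℝ (⊤:ℕ∞) g) (n : ℕ) :
    ContDiff ℝ (⊤:ℕ∞) (iteratedDeriv n g) := by
  rw [iteratedDeriv_eq_iterate]; exact hg.iterate_deriv n

lemma accz_val {θ₀ : ℝ} {g : ℝ → ℝ} (hg : Continuous g) (h : AccZ θ₀ g) : g θ₀ = 0 := by
  by_contra hne
  obtain ⟨δ, hδ, hball⟩ := Metric.eventually_nhds_iff_ball.1
    (hg.continuousAt.eventually_ne hne)
  obtain ⟨t, ht0, htδ, htz⟩ := h δ hδ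
  exact hball t (by simpa [Real.dist_eq] using htδ) htz

lemma accz_deriv {θ₀ : ℝ} {g : ℝ → ℝ} (hg : ContDiff ℝ (⊤:ℕ∞) g) (h : AccZ θ₀ g) :
    AccZ θ₀ (deriv g) := by
  intro ε hε
  obtain ⟨t, ht0, htδ, htz⟩ := h ε hε
  have h0 : g θ₀ = 0 := accz_val hg.continuous h
  have hh := abs_sub_lt_iff.1 htδ
  rcases lt_or_gt_of_ne ht0 with hlt | hgt
  · obtain ⟨c, hc, hc0⟩ := exists_deriv_eq_zero hlt (hg.continuous.continuousOn)
      (by rw [htz, h0])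
    obtain ⟨hc1, hc2⟩ := hc
    exact ⟨c, ne_of_lt hc2, by rw [abs_sub_lt_iff]; constructor <;> linarith, hc0⟩
  · obtain ⟨c, hc, hc0⟩ := exists_deriv_eq_zero hgt (hg.continuous.continuousOn)
      (by rw [h0, htz])
    obtain ⟨hc1, hc2⟩ := hc
    exact ⟨c, ne_of_gt hc1, by rw [abs_sub_lt_iff]; constructor <;> linarith, hc0⟩

lemma accz_qq {θ₀ : ℝ} {g : ℝ → ℝ} (hg : ContDiff ℝ (⊤:ℕ∞) g) (h : AccZ θ₀ g) : QQ θ₀ g := by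
  have key : ∀ n, AccZ θ₀ (iteratedDeriv n g) := by
    intro n
    induction n with
    | zero => simpa [iteratedDeriv_zero] using h
    | succ n ih =>
      rw [iteratedDeriv_succ]
      exact accz_deriv (smooth_iteratedDeriv hg n) ih
  intro n
  exact accz_val (smooth_iteratedDeriv hg n).continuous (key n)

lemma qq_deriv {θ₀ : ℝ} {g : ℝ → ℝ} (h : QQ θ₀ g) : QQ θ₀ (deriv g) := by
  intro n
  have := h (n + 1)
  rwa [iteratedDeriv_succ'] at this

lemma iteratedDeriv_add_point {g₁ g₂ : ℝ → ℝ} {x : ℝ} (n : ℕ)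
    (h₁s : ContDiff ℝ (⊤:ℕ∞) g₁) (h₂s : ContDiff ℝ (⊤:ℕ∞) g₂) :
    iteratedDeriv n (fun t => g₁ t + g₂ t) x = iteratedDeriv n g₁ x + iteratedDeriv n g₂ x := by
  rw [iteratedDeriv, iteratedDeriv, iteratedDeriv,
    iteratedFDeriv_add_apply' (h₁s.of_le (by exact_mod_cast le_top)).contDiffAt
      (h₂s.of_le (by exact_mod_cast le_top)).contDiffAt]
  rfl

lemma qq_add {θ₀ : ℝ} {g₁ g₂ : ℝ → ℝ} (h₁s : ContDiff ℝ (⊤:ℕ∞) g₁) (h₂s : ContDiff ℝ (⊤:ℕ∞) g₂)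
    (h₁ : QQ θ₀ g₁) (h₂ : QQ θ₀ g₂) : QQ θ₀ (fun t => g₁ t + g₂ t) := by
  intro n
  rw [iteratedDeriv_add_point n h₁s h₂s, h₁ n, h₂ n, add_zero]

lemma qq_mul {θ₀ : ℝ} {φ ψ : ℝ → ℝ} (hφ : ContDiff ℝ (⊤:ℕ∞) φ) (hψ : ContDiff ℝ (⊤:ℕ∞) ψ)
    (h : QQ θ₀ ψ) : QQ θ₀ (fun t => φ t * ψ t) := by
  intro n
  induction n generalizing φ ψ with
  | zero => simp [iteratedDeriv_zero]; have := h 0; rw [iteratedDeriv_zero] at this; simp [this]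
  | succ n ih =>
    rw [iteratedDeriv_succ']
    have hd : deriv (fun t => φ t * ψ t) = fun t => (deriv φ t * ψ t + φ t * deriv ψ t) := by
      funext t
      exact deriv_fun_mul (hφ.differentiable (by simp) t) (hψ.differentiable (by simp) t)
    rw [hd]
    have hφ' : ContDiff ℝ (⊤:ℕ∞) (deriv φ) := (contDiff_infty_iff_deriv.1 hφ).2
    have hψ' : ContDiff ℝ (⊤:ℕ∞) (deriv ψ) := (contDiff_infty_iff_deriv.1 hψ).2
    rw [iteratedDeriv_add_point n (hφ'.mul hψ) (hφ.mul hψ'), ih hφ' hψ h, ih hφ hψ' (qq_deriv h), add_zero]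



def gzS : Set (ℝ × ℝ) := {x | x ≠ 0}

lemma gzS_open : IsOpen gzS := isOpen_ne

lemma gzS_unique : UniqueDiffOn ℝ gzS := gzS_open.uniqueDiffOn

noncomputable def gzc (θ : ℝ) : ℝ × ℝ := (Real.cos θ, Real.sin θ)

lemma gzc_ne (θ : ℝ) : gzc θ ≠ 0 := by
  intro h
  have h1 : Real.cos θ = 0 := congrArg Prod.fst h
  have h2 : Real.sin θ = 0 := congrArg Prod.snd h
  have := Real.sin_sq_add_cos_sq θ
  rw [h1, h2] at this; norm_num at this

lemma gzc_smooth : ContDiff ℝ (⊤:ℕ∞) gzc :=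
  ContDiff.prodMk Real.contDiff_cos Real.contDiff_sin

lemma comp_gzc_smooth {h : ℝ × ℝ → ℝ} (hs : ContDiffOn ℝ (⊤:ℕ∞) h gzS) :
    ContDiff ℝ (⊤:ℕ∞) (fun θ => h (gzc θ)) := by
  rw [← contDiffOn_univ]
  exact hs.comp (gzc_smooth.contDiffOn) (fun θ _ => gzc_ne θ)

lemma fderiv_apply_pair (h : ℝ × ℝ → ℝ) (x : ℝ × ℝ) (v : ℝ × ℝ) :
    fderiv ℝ h x v = v.1 * pd1 h x + v.2 * pd2 h x := by
  have hv : v = v.1 • ((1:ℝ), (0:ℝ)) + v.2 • ((0:ℝ), (1:ℝ)) := by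
    ext <;> simp
  rw [hv, map_add, map_smul, map_smul]
  simp [pd1, pd2, mul_comm]

lemma diffAt_of_smoothS {h : ℝ × ℝ → ℝ} (hs : ContDiffOn ℝ (⊤:ℕ∞) h gzS)
    {x : ℝ × ℝ} (hx : x ≠ 0) : DifferentiableAt ℝ h x :=
  (hs.contDiffAt (gzS_open.mem_nhds hx)).differentiableAt (by simp)

lemma deriv_comp_gzc {h : ℝ × ℝ → ℝ} (hs : ContDiffOn ℝ (⊤:ℕ∞) h gzS) (θ : ℝ) :
    deriv (fun θ => h (gzc θ)) θ
      = (-Real.sin θ) * pd1 h (gzc θ) + Real.cos θ * pd2 h (gzc θ) := by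
  have hγ : HasDerivAt gzc (-Real.sin θ, Real.cos θ) θ :=
    HasDerivAt.prodMk (Real.hasDerivAt_cos θ) (Real.hasDerivAt_sin θ)
  have hh : HasFDerivAt h (fderiv ℝ h (gzc θ)) (gzc θ) :=
    (diffAt_of_smoothS hs (gzc_ne θ)).hasFDerivAt
  have := (hh.comp_hasDerivAt θ hγ).deriv
  rw [show (fun θ => h (gzc θ)) = h ∘ gzc from rfl, this, fderiv_apply_pair]

section
variable {κ₁ κ₂ : ℝ} (hκ₁ : 0 < κ₁) (hκ₂ : 0 < κ₂)

lemma rpow_hasDerivAt_one (p : ℝ) : HasDerivAt (fun r : ℝ => r ^ p) p 1 := by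
  have := Real.hasDerivAt_rpow_const (x := (1:ℝ)) (p := p) (Or.inl one_ne_zero)
  simpa using this

lemma dil_hasDerivAt (x : ℝ × ℝ) :
    HasDerivAt (fun r : ℝ => ((r ^ κ₁ * x.1, r ^ κ₂ * x.2) : ℝ × ℝ))
      (κ₁ * x.1, κ₂ * x.2) 1 :=
  HasDerivAt.prodMk ((rpow_hasDerivAt_one κ₁).mul_const x.1) ((rpow_hasDerivAt_one κ₂).mul_const x.2)

lemma gz_euler {h : ℝ × ℝ → ℝ} {α : ℝ} (hs : ContDiffOn ℝ (⊤:ℕ∞) h gzS)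
    (hhom : ∀ x : ℝ × ℝ, x ≠ 0 → ∀ r : ℝ, 0 < r →
      h (r ^ κ₁ * x.1, r ^ κ₂ * x.2) = r ^ α * h x)
    {x : ℝ × ℝ} (hx : x ≠ 0) :
    κ₁ * x.1 * pd1 h x + κ₂ * x.2 * pd2 h x = α * h x := by
  have hc1 : ((1:ℝ) ^ κ₁ * x.1, (1:ℝ) ^ κ₂ * x.2) = x := by simp
  have hcomp : HasDerivAt (fun r : ℝ => h (r ^ κ₁ * x.1, r ^ κ₂ * x.2))
      (fderiv ℝ h x (κ₁ * x.1, κ₂ * x.2)) 1 := by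
    have hd := (diffAt_of_smoothS hs hx).hasFDerivAt
    rw [← hc1] at hd
    have := hd.comp_hasDerivAt 1 (dil_hasDerivAt x)
    rw [hc1] at this; exact this
  have hrhs : HasDerivAt (fun r : ℝ => r ^ α * h x) (α * h x) 1 := by
    simpa using (rpow_hasDerivAt_one α).mul_const (h x)
  have hev : (fun r : ℝ => h (r ^ κ₁ * x.1, r ^ κ₂ * x.2)) =ᶠ[nhds 1]
      (fun r : ℝ => r ^ α * h x) := by
    filter_upwards [Ioi_mem_nhds (show (0:ℝ) < 1 by norm_num)] with r hr
    exact hhom x hx r hr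
  have := hcomp.congr_of_eventuallyEq hev.symm
  have huniq := this.unique hrhs
  rw [← huniq, fderiv_apply_pair]; try ring

/-- the dilation as a continuous linear map -/
noncomputable def dilL (r : ℝ) : (ℝ × ℝ) →L[ℝ] (ℝ × ℝ) :=
  ((r ^ κ₁ : ℝ) • ContinuousLinearMap.id ℝ ℝ).prodMap ((r ^ κ₂ : ℝ) • ContinuousLinearMap.id ℝ ℝ)

include hκ₁ hκ₂ in
lemma pd_homog {h : ℝ × ℝ → ℝ} {α : ℝ} (hs : ContDiffOn ℝ (⊤:ℕ∞) h gzS)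
    (hhom : ∀ x : ℝ × ℝ, x ≠ 0 → ∀ r : ℝ, 0 < r →
      h (r ^ κ₁ * x.1, r ^ κ₂ * x.2) = r ^ α * h x)
    {x : ℝ × ℝ} (hx : x ≠ 0) {r : ℝ} (hr : 0 < r) :
    pd1 h (r ^ κ₁ * x.1, r ^ κ₂ * x.2) = r ^ (α - κ₁) * pd1 h x ∧
    pd2 h (r ^ κ₁ * x.1, r ^ κ₂ * x.2) = r ^ (α - κ₂) * pd2 h x := by
  have hL : ∀ y : ℝ × ℝ, (dilL (κ₁:=κ₁) (κ₂:=κ₂) r) y = (r ^ κ₁ * y.1, r ^ κ₂ * y.2) := by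
    intro y; simp [dilL, Prod.map, smul_eq_mul]
  have hr1 : (r:ℝ) ^ κ₁ ≠ 0 := ne_of_gt (Real.rpow_pos_of_pos hr κ₁)
  have hr2 : (r:ℝ) ^ κ₂ ≠ 0 := ne_of_gt (Real.rpow_pos_of_pos hr κ₂)
  set L := dilL (κ₁:=κ₁) (κ₂:=κ₂) r with hLdef
  have hLx : L x ≠ 0 := by
    rw [hL]
    intro h0
    apply hx
    have h01 : r ^ κ₁ * x.1 = 0 := congrArg Prod.fst h0
    have h02 : r ^ κ₂ * x.2 = 0 := congrArg Prod.snd h0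
    ext
    · exact (mul_eq_zero.1 h01).resolve_left hr1
    · exact (mul_eq_zero.1 h02).resolve_left hr2
  have hdh : DifferentiableAt ℝ h (L x) := diffAt_of_smoothS hs hLx
  have hchain : fderiv ℝ (fun y => h (L y)) x = (fderiv ℝ h (L x)).comp L := by
    exact (hdh.hasFDerivAt.comp x L.hasFDerivAt).fderiv
  have hev : (fun y => h (L y)) =ᶠ[nhds x] (fun y => r ^ α * h y) := by
    filter_upwards [gzS_open.mem_nhds hx] with y hy
    rw [hL]; exact hhom y hy r hr
  have hdx : DifferentiableAt ℝ h x := diffAt_of_smoothS hs hx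
  have hrhs : fderiv ℝ (fun y => r ^ α * h y) x = (r ^ α : ℝ) • fderiv ℝ h x := by
    exact fderiv_const_mul hdx _
  have hmain : (fderiv ℝ h (L x)).comp L = (r ^ α : ℝ) • fderiv ℝ h x := by
    rw [← hchain, ← hrhs]; exact hev.fderiv_eq
  have key : ∀ v : ℝ × ℝ, fderiv ℝ h (L x) (L v) = r ^ α * fderiv ℝ h x v := by
    intro v
    have h0 := congrArg (fun T : (ℝ × ℝ) →L[ℝ] ℝ => T v) hmain
    simpa using h0
  constructor
  · have h0 := key (1, 0)
    rw [hL (1, 0), fderiv_apply_pair] at h0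
    simp only [mul_one, mul_zero, zero_mul, add_zero] at h0
    have hpd : fderiv ℝ h x (1, 0) = pd1 h x := rfl
    rw [hpd] at h0
    have hre : r ^ α = r ^ (α - κ₁) * r ^ κ₁ := by
      rw [← Real.rpow_add hr, sub_add_cancel]
    have h2 : r ^ κ₁ * pd1 h (L x) = r ^ κ₁ * (r ^ (α - κ₁) * pd1 h x) := by
      rw [h0, hre]; ring
    rw [← hL x]
    exact mul_left_cancel₀ hr1 h2
  · have h0 := key (0, 1)
    rw [hL (0, 1), fderiv_apply_pair] at h0
    simp only [mul_one, mul_zero, zero_mul, zero_add] at h0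
    have hpd : fderiv ℝ h x (0, 1) = pd2 h x := rfl
    rw [hpd] at h0
    have hre : r ^ α = r ^ (α - κ₂) * r ^ κ₂ := by
      rw [← Real.rpow_add hr, sub_add_cancel]
    have h2 : r ^ κ₂ * pd2 h (L x) = r ^ κ₂ * (r ^ (α - κ₂) * pd2 h x) := by
      rw [h0, hre]; ring
    rw [← hL x]
    exact mul_left_cancel₀ hr2 h2

lemma pd_smooth_s14 {h : ℝ × ℝ → ℝ} (hs : ContDiffOn ℝ (⊤:ℕ∞) h gzS) :
    ContDiffOn ℝ (⊤:ℕ∞) (pd1 h) gzS ∧ ContDiffOn ℝ (⊤:ℕ∞) (pd2 h) gzS := by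
  have hfd : ContDiffOn ℝ (⊤:ℕ∞) (fun x => fderivWithin ℝ h gzS x) gzS :=
    hs.fderivWithin gzS_unique (by exact_mod_cast le_top)
  have hfd' : ContDiffOn ℝ (⊤:ℕ∞) (fun x => fderiv ℝ h x) gzS := by
    apply hfd.congr
    intro x hx
    exact (fderivWithin_of_isOpen gzS_open hx).symm
  exact ⟨hfd'.clm_apply contDiffOn_const, hfd'.clm_apply contDiffOn_const⟩
end

structure Good (κ₁ κ₂ θ₀ α : ℝ) (h : ℝ × ℝ → ℝ) : Prop where
  smooth : ContDiffOn ℝ (⊤:ℕ∞) h gzS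
  hom : ∀ x : ℝ × ℝ, x ≠ 0 → ∀ r : ℝ, 0 < r → h (r ^ κ₁ * x.1, r ^ κ₂ * x.2) = r ^ α * h x
  qq : QQ θ₀ (fun θ => h (gzc θ))

section
variable {κ₁ κ₂ θ₀ α : ℝ} (hκ₁ : 0 < κ₁) (hκ₂ : 0 < κ₂)

include hκ₁ hκ₂ in
lemma gzD_pos (θ : ℝ) : 0 < κ₁ * Real.cos θ ^ 2 + κ₂ * Real.sin θ ^ 2 := by
  have h := Real.sin_sq_add_cos_sq θ
  rcases eq_or_ne (Real.cos θ) 0 with hc | hc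
  · have : Real.sin θ ^ 2 = 1 := by rw [hc] at h; linarith
    rw [hc, this]; nlinarith
  · have h1 : 0 < Real.cos θ ^ 2 := by positivity
    nlinarith [sq_nonneg (Real.sin θ)]

lemma gzD_smooth : ContDiff ℝ (⊤:ℕ∞) (fun θ => κ₁ * Real.cos θ ^ 2 + κ₂ * Real.sin θ ^ 2) :=
  ((contDiff_const.mul (Real.contDiff_cos.pow 2)).add
    (contDiff_const.mul (Real.contDiff_sin.pow 2)))

include hκ₁ hκ₂ in
lemma good_pd {h : ℝ × ℝ → ℝ} (hg : Good κ₁ κ₂ θ₀ α h) :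
    Good κ₁ κ₂ θ₀ (α - κ₁) (pd1 h) ∧ Good κ₁ κ₂ θ₀ (α - κ₂) (pd2 h) := by
  set D : ℝ → ℝ := fun θ => κ₁ * Real.cos θ ^ 2 + κ₂ * Real.sin θ ^ 2 with hD
  have hDne : ∀ θ, D θ ≠ 0 := fun θ => ne_of_gt (gzD_pos hκ₁ hκ₂ θ)
  set u : ℝ → ℝ := deriv (fun θ => h (gzc θ)) with hu
  have hγs : ContDiff ℝ (⊤:ℕ∞) (fun θ => h (gzc θ)) := comp_gzc_smooth hg.smooth
  have hus : ContDiff ℝ (⊤:ℕ∞) u := (contDiff_infty_iff_deriv.1 hγs).2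
  have huq : QQ θ₀ u := qq_deriv hg.qq
  have hDs : ContDiff ℝ (⊤:ℕ∞) D := gzD_smooth
  have key : ∀ θ : ℝ,
      pd1 h (gzc θ) * D θ = α * Real.cos θ * h (gzc θ) - κ₂ * Real.sin θ * u θ ∧
      pd2 h (gzc θ) * D θ = α * Real.sin θ * h (gzc θ) + κ₁ * Real.cos θ * u θ := by
    intro θ
    have E1 : u θ = (-Real.sin θ) * pd1 h (gzc θ) + Real.cos θ * pd2 h (gzc θ) :=
      deriv_comp_gzc hg.smooth θ
    have E2 : κ₁ * (gzc θ).1 * pd1 h (gzc θ) + κ₂ * (gzc θ).2 * pd2 h (gzc θ)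
        = α * h (gzc θ) := gz_euler hg.smooth hg.hom (gzc_ne θ)
    have hc1 : (gzc θ).1 = Real.cos θ := rfl
    have hc2 : (gzc θ).2 = Real.sin θ := rfl
    rw [hc1, hc2] at E2
    constructor
    · simp only [hD]
      linear_combination Real.cos θ * E2 + κ₂ * Real.sin θ * E1
    · simp only [hD]
      linear_combination Real.sin θ * E2 - κ₁ * Real.cos θ * E1
  have hq1 : QQ θ₀ (fun θ => pd1 h (gzc θ)) := by
    have heq : (fun θ => pd1 h (gzc θ))
        = fun θ => (α * Real.cos θ / D θ) * h (gzc θ) + (-(κ₂ * Real.sin θ) / D θ) * u θ := by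
      funext θ
      have hk := (key θ).1
      rw [div_mul_eq_mul_div, div_mul_eq_mul_div, ← add_div, eq_div_iff (hDne θ)]
      linear_combination hk
    rw [heq]
    exact qq_add
      (((contDiff_const.mul Real.contDiff_cos).div hDs hDne).mul hγs)
      ((((contDiff_const.mul Real.contDiff_sin).neg).div hDs hDne).mul hus)
      (qq_mul ((contDiff_const.mul Real.contDiff_cos).div hDs hDne) hγs hg.qq)
      (qq_mul (((contDiff_const.mul Real.contDiff_sin).neg).div hDs hDne) hus huq)
  have hq2 : QQ θ₀ (fun θ => pd2 h (gzc θ)) := by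
    have heq : (fun θ => pd2 h (gzc θ))
        = fun θ => (α * Real.sin θ / D θ) * h (gzc θ) + ((κ₁ * Real.cos θ) / D θ) * u θ := by
      funext θ
      have hk := (key θ).2
      rw [div_mul_eq_mul_div, div_mul_eq_mul_div, ← add_div, eq_div_iff (hDne θ)]
      linear_combination hk
    rw [heq]
    exact qq_add
      (((contDiff_const.mul Real.contDiff_sin).div hDs hDne).mul hγs)
      (((contDiff_const.mul Real.contDiff_cos).div hDs hDne).mul hus)
      (qq_mul ((contDiff_const.mul Real.contDiff_sin).div hDs hDne) hγs hg.qq)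
      (qq_mul ((contDiff_const.mul Real.contDiff_cos).div hDs hDne) hus huq)
  refine ⟨⟨(pd_smooth_s14 hg.smooth).1, ?_, hq1⟩, ⟨(pd_smooth_s14 hg.smooth).2, ?_, hq2⟩⟩
  · intro x hx r hr
    exact (pd_homog hκ₁ hκ₂ hg.smooth hg.hom hx hr).1
  · intro x hx r hr
    exact (pd_homog hκ₁ hκ₂ hg.smooth hg.hom hx hr).2

include hκ₁ hκ₂ in
lemma good_iter :
    ∀ n : ℕ, ∀ (β : ℝ) (h : ℝ × ℝ → ℝ), Good κ₁ κ₂ θ₀ β h →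
      iteratedFDerivWithin ℝ n h gzS (gzc θ₀) = 0 := by
  intro n
  induction n with
  | zero =>
    intro β h hg
    ext m
    rw [iteratedFDerivWithin_zero_apply]
    have h0 := hg.qq 0
    rw [iteratedDeriv_zero] at h0
    simpa using h0
  | succ n ih =>
    intro β h hg
    obtain ⟨hg1, hg2⟩ := good_pd hκ₁ hκ₂ hg
    have hpd1 : iteratedFDerivWithin ℝ n (pd1 h) gzS (gzc θ₀) = 0 := ih _ _ hg1
    have hpd2 : iteratedFDerivWithin ℝ n (pd2 h) gzS (gzc θ₀) = 0 := ih _ _ hg2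
    have hx : gzc θ₀ ∈ gzS := gzc_ne θ₀
    set P1 : (ℝ × ℝ) →L[ℝ] ℝ := ContinuousLinearMap.fst ℝ ℝ ℝ with hP1
    set P2 : (ℝ × ℝ) →L[ℝ] ℝ := ContinuousLinearMap.snd ℝ ℝ ℝ with hP2
    set L1 : ℝ →L[ℝ] ((ℝ × ℝ) →L[ℝ] ℝ) := (ContinuousLinearMap.id ℝ ℝ).smulRight P1 with hL1
    set L2 : ℝ →L[ℝ] ((ℝ × ℝ) →L[ℝ] ℝ) := (ContinuousLinearMap.id ℝ ℝ).smulRight P2 with hL2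
    have hEq : Set.EqOn (fun y => fderivWithin ℝ h gzS y)
        (fun y => (L1 ∘ pd1 h) y + (L2 ∘ pd2 h) y) gzS := by
      intro y hy
      simp only [Function.comp_apply]
      rw [fderivWithin_of_isOpen gzS_open hy]
      apply ContinuousLinearMap.ext
      intro v
      rw [fderiv_apply_pair]
      simp [hL1, hL2, hP1, hP2, ContinuousLinearMap.smulRight_apply, smul_eq_mul]
      ring
    have hc1 : ContDiffOn ℝ ((n:ℕ∞)) (L1 ∘ pd1 h) gzS :=
      (L1.contDiff.comp_contDiffOn ((pd_smooth_s14 hg.smooth).1.of_le (by exact_mod_cast le_top)))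
    have hc2 : ContDiffOn ℝ ((n:ℕ∞)) (L2 ∘ pd2 h) gzS :=
      (L2.contDiff.comp_contDiffOn ((pd_smooth_s14 hg.smooth).2.of_le (by exact_mod_cast le_top)))
    have hzero : iteratedFDerivWithin ℝ n (fun y => fderivWithin ℝ h gzS y) gzS (gzc θ₀) = 0 := by
      rw [iteratedFDerivWithin_congr hEq hx n]
      rw [iteratedFDerivWithin_add_apply' (hc1 _ hx) (hc2 _ hx) gzS_unique hx]
      rw [L1.iteratedFDerivWithin_comp_left ((pd_smooth_s14 hg.smooth).1 _ hx) gzS_unique hx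
        (by exact_mod_cast le_top)]
      rw [L2.iteratedFDerivWithin_comp_left ((pd_smooth_s14 hg.smooth).2 _ hx) gzS_unique hx
        (by exact_mod_cast le_top)]
      rw [hpd1, hpd2]
      refine ContinuousMultilinearMap.ext fun m => ?_
      refine ContinuousLinearMap.ext fun v => ?_
      simp [ContinuousLinearMap.compContinuousMultilinearMap_coe]
    ext m
    rw [iteratedFDerivWithin_succ_apply_right gzS_unique hx m, hzero]
    simp
end

lemma gz_angle (x : ℝ × ℝ) (hx : x.1 ^ 2 + x.2 ^ 2 = 1) :
    ∃ θ ∈ Icc (-π) π, gzc θ = x := by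
  have h1 : -1 ≤ x.1 := by nlinarith
  have h2 : x.1 ≤ 1 := by nlinarith
  have hre : 1 - x.1 ^ 2 = x.2 ^ 2 := by linarith
  rcases le_or_gt 0 x.2 with hb | hb
  · refine ⟨Real.arccos x.1, ⟨by linarith [Real.arccos_nonneg x.1, Real.pi_pos],
      Real.arccos_le_pi x.1⟩, ?_⟩
    have hsin : Real.sin (Real.arccos x.1) = x.2 := by
      rw [Real.sin_arccos, hre, Real.sqrt_sq hb]
    have hcos : Real.cos (Real.arccos x.1) = x.1 := Real.cos_arccos h1 h2
    exact Prod.ext hcos hsin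
  · refine ⟨-Real.arccos x.1, ⟨by linarith [Real.arccos_le_pi x.1],
      by linarith [Real.arccos_nonneg x.1, Real.pi_pos]⟩, ?_⟩
    have hsin : Real.sin (-Real.arccos x.1) = x.2 := by
      rw [Real.sin_neg, Real.sin_arccos, hre]
      rw [show x.2 ^ 2 = (-x.2) ^ 2 by ring, Real.sqrt_sq (by linarith)]
      ring
    have hcos : Real.cos (-Real.arccos x.1) = x.1 := by
      rw [Real.cos_neg]; exact Real.cos_arccos h1 h2
    exact Prod.ext hcos hsin

/-- If `f` is `κ`-homogeneous of degree 1, smooth away from the origin, and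
has finite vanishing order at every point of the unit circle, then `∇f` has only finitely many
zeros on the unit circle. -/
theorem gradient_zeros_finite
    (κ₁ κ₂ : ℝ) (hκ₁ : 0 < κ₁) (hκ₂ : 0 < κ₂)
    (f : ℝ × ℝ → ℝ)
    (hhom : ∀ x : ℝ × ℝ, x ≠ 0 → ∀ r : ℝ, 0 < r →
      f (r ^ κ₁ * x.1, r ^ κ₂ * x.2) = r * f x)
    (hsm : ContDiffOn ℝ (⊤ : ℕ∞) f {x : ℝ × ℝ | x ≠ 0})
    (hord : ∀ x : ℝ × ℝ, x.1 ^ 2 + x.2 ^ 2 = 1 → ∃ j : ℕ, iteratedFDeriv ℝ j f x ≠ 0) :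
    {x : ℝ × ℝ | x.1 ^ 2 + x.2 ^ 2 = 1 ∧ pd1 f x = 0 ∧ pd2 f x = 0}.Finite := by
  by_contra hfin
  have hsm' : ContDiffOn ℝ (⊤:ℕ∞) f gzS := hsm
  set K := {x : ℝ × ℝ | x.1 ^ 2 + x.2 ^ 2 = 1 ∧ pd1 f x = 0 ∧ pd2 f x = 0} with hK
  have hKinf : K.Infinite := hfin
  set T := {θ : ℝ | θ ∈ Icc (-π) π ∧ gzc θ ∈ K} with hT
  have hKT : K ⊆ gzc '' T := by
    intro x hx
    obtain ⟨θ, hθI, hθx⟩ := gz_angle x hx.1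
    exact ⟨θ, ⟨hθI, by rw [hθx]; exact hx⟩, hθx⟩
  have hTinf : T.Infinite := by
    intro hfinT
    exact hKinf ((hfinT.image gzc).subset hKT)
  obtain ⟨θ₀, hθ₀I, hacc⟩ :=
    hTinf.exists_accPt_of_subset_isCompact isCompact_Icc (fun θ hθ => hθ.1)
  have haccz : ∀ g : ℝ → ℝ, (∀ θ ∈ T, g θ = 0) → AccZ θ₀ g := by
    intro g hgz ε hε
    rw [accPt_iff_nhds] at hacc
    obtain ⟨t, ⟨htb, htT⟩, htne⟩ := hacc (Metric.ball θ₀ ε) (Metric.ball_mem_nhds θ₀ hε)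
    exact ⟨t, htne, by simpa [Real.dist_eq] using htb, hgz t htT⟩
  have hKne : ∀ x ∈ K, x ≠ 0 := by
    intro x hx h0
    rw [h0] at hx
    have h1 := hx.1
    norm_num [Prod.fst_zero, Prod.snd_zero] at h1
  have hhom1 : ∀ x : ℝ × ℝ, x ≠ 0 → ∀ r : ℝ, 0 < r →
      f (r ^ κ₁ * x.1, r ^ κ₂ * x.2) = r ^ (1:ℝ) * f x := by
    intro x hx r hr
    rw [Real.rpow_one]
    exact hhom x hx r hr
  have hfz : ∀ x ∈ K, f x = 0 := by
    intro x hx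
    have he := gz_euler (κ₁ := κ₁) (κ₂ := κ₂) hsm' hhom1 (hKne x hx)
    rw [hx.2.1, hx.2.2] at he
    linarith [he]
  have hqq : QQ θ₀ (fun θ => f (gzc θ)) :=
    accz_qq (comp_gzc_smooth hsm') (haccz _ (fun θ hθ => hfz _ hθ.2))
  have hgood : Good κ₁ κ₂ θ₀ 1 f := ⟨hsm', hhom1, hqq⟩
  have hcirc : (gzc θ₀).1 ^ 2 + (gzc θ₀).2 ^ 2 = 1 := by
    have := Real.sin_sq_add_cos_sq θ₀
    simp only [gzc]
    linarith
  obtain ⟨j, hj⟩ := hord (gzc θ₀) hcirc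
  apply hj
  rw [← iteratedFDerivWithin_of_isOpen j gzS_open (gzc_ne θ₀)]
  exact good_iter hκ₁ hκ₂ j 1 f hgood
end
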